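/- arXiv:math/0202219 — 4 statements merged into one kernel-verified Lean document; each statement's English description precedes it below -/
import Mathlib

section
/- For every n ≥ 2, the number of permutations of {1,...,n} avoiding 13-2 and containing exactly one occurrence of 21-3 equals (n-2)·2^(n-3). -/
/-- The value of the permutation at position `i` (0-indexed), or 0 if out of range. -/
def permVal {n : ℕ} (π : Equiv.Perm (Fin n)) (i : ℕ) : ℕ :=
  if h : i < n then (π ⟨i, h⟩ : ℕ) else 0

/-- Number of occurrences of the generalized pattern 12-3. -/
def occ12_3 {n : ℕ} (π : Equiv.Perm (Fin n)) : ℕ :=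
  ((Finset.range n ×ˢ Finset.range n).filter (fun p =>
    p.1 + 1 < p.2 ∧ permVal π p.1 < permVal π (p.1 + 1) ∧
      permVal π (p.1 + 1) < permVal π p.2)).card

/-- Number of occurrences of the generalized pattern 13-2. -/
def occ13_2 {n : ℕ} (π : Equiv.Perm (Fin n)) : ℕ :=
  ((Finset.range n ×ˢ Finset.range n).filter (fun p =>
    p.1 + 1 < p.2 ∧ permVal π p.1 < permVal π p.2 ∧
      permVal π p.2 < permVal π (p.1 + 1))).card

/-- Number of occurrences of the generalized pattern 21-3. -/
def occ21_3 {n : ℕ} (π : Equiv.Perm (Fin n)) : ℕ :=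
  ((Finset.range n ×ˢ Finset.range n).filter (fun p =>
    p.1 + 1 < p.2 ∧ permVal π (p.1 + 1) < permVal π p.1 ∧
      permVal π p.1 < permVal π p.2)).card

/-- Number of occurrences of the generalized pattern 23-1. -/
def occ23_1 {n : ℕ} (π : Equiv.Perm (Fin n)) : ℕ :=
  ((Finset.range n ×ˢ Finset.range n).filter (fun p =>
    p.1 + 1 < p.2 ∧ permVal π p.2 < permVal π p.1 ∧
      permVal π p.1 < permVal π (p.1 + 1))).card

/-- Number of occurrences of the generalized pattern 31-2. -/
def occ31_2 {n : ℕ} (π : Equiv.Perm (Fin n)) : ℕ :=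
  ((Finset.range n ×ˢ Finset.range n).filter (fun p =>
    p.1 + 1 < p.2 ∧ permVal π (p.1 + 1) < permVal π p.2 ∧
      permVal π p.2 < permVal π p.1)).card

/-- Number of occurrences of the generalized pattern 32-1. -/
def occ32_1 {n : ℕ} (π : Equiv.Perm (Fin n)) : ℕ :=
  ((Finset.range n ×ˢ Finset.range n).filter (fun p =>
    p.1 + 1 < p.2 ∧ permVal π p.2 < permVal π (p.1 + 1) ∧
      permVal π (p.1 + 1) < permVal π p.1)).card


/-!
Let `σ` avoid 13-2 and let its maximum `n - 1` sit at position `m`. For `i < m < j`, a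
descending induction on `i` shows `σ j < σ i` (otherwise `(i, j)` would be an occurrence of
13-2), so `σ` is the concatenation of `α + k`, the maximum and `β`, where `α` and `β` are
13-2-avoiding permutations of sizes `m` and `k = n - 1 - m`. The occurrences of 21-3 in `σ` are
those of `α`, those of `β`, and one for each descent of `α`, which the maximum closes.
Counting by the position of the maximum, the numbers `F`, `H`, `G` of 13-2-avoiders with no
21-3, with no 21-3 and one descent, and with exactly one 21-3 (`avoidCount`,
`avoidOneDescentCount`, `oneOccCount`) satisfy
`F (N + 1) = ∑_{m + k = N} F k`, `H (N + 1) = N` and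
`G (N + 1) = ∑_{m + k = N} (H m * F k + G k)`.
Hence `F (N + 1) = 2 ^ N`, and `G (N + 3) = 2 * G (N + 2) + 2 ^ N`, which solves to
`G n = (n - 2) * 2 ^ (n - 3)`.
-/

open Finset Equiv

section PermVal

variable {n : ℕ} (π : Perm (Fin n))

theorem permVal_of_lt {i : ℕ} (hi : i < n) : permVal π i = π ⟨i, hi⟩ := dif_pos hi

theorem permVal_lt {i : ℕ} (hi : i < n) : permVal π i < n := by
  rw [permVal_of_lt π hi]
  exact (π _).isLt

theorem permVal_inj {i j : ℕ} (hi : i < n) (hj : j < n) :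
    permVal π i = permVal π j ↔ i = j := by
  rw [permVal_of_lt π hi, permVal_of_lt π hj, Fin.val_inj, π.apply_eq_iff_eq, Fin.mk.injEq]

theorem permVal_one {i : ℕ} (hi : i < n) : permVal (1 : Perm (Fin n)) i = i := by
  simp [permVal_of_lt _ hi]

theorem eq_of_permVal_eq {σ τ : Perm (Fin n)} (h : ∀ i < n, permVal σ i = permVal τ i) :
    σ = τ :=
  Equiv.ext fun x => Fin.ext <| by simpa [permVal_of_lt _ x.2] using h x x.2

theorem card_le_card_of_permVal_mem {s t : Finset ℕ} (hs : ∀ i ∈ s, i < n)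
    (h : ∀ i ∈ s, permVal π i ∈ t) : #s ≤ #t :=
  card_le_card_of_injOn _ h fun i hi j hj hij => (permVal_inj π (hs i hi) (hs j hj)).1 hij

end PermVal

noncomputable def permOfFun (n : ℕ) (w : ℕ → ℕ) (hw : ∀ i < n, w i < n)
    (hinj : ∀ i < n, ∀ j < n, w i = w j → i = j) : Perm (Fin n) :=
  Equiv.ofBijective (fun i => ⟨w i, hw i i.2⟩) <| Finite.injective_iff_bijective.mp
    fun i j h => Fin.ext (hinj i i.2 j j.2 (congrArg Fin.val h))

theorem permVal_permOfFun {n : ℕ} {w : ℕ → ℕ} (hw : ∀ i < n, w i < n)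
    (hinj : ∀ i < n, ∀ j < n, w i = w j → i = j) {i : ℕ} (hi : i < n) :
    permVal (permOfFun n w hw hinj) i = w i := by
  rw [permVal_of_lt _ hi]
  rfl

section Descents

variable {n : ℕ}

def desc (π : Perm (Fin n)) : ℕ :=
  #{i ∈ range n | i + 1 < n ∧ permVal π (i + 1) < permVal π i}

theorem desc_le (π : Perm (Fin n)) : desc π ≤ n :=
  (card_filter_le _ _).trans (card_range n).le

theorem desc_eq_zero_iff {π : Perm (Fin n)} : desc π = 0 ↔ π = 1 := by
  constructor
  · intro h
    have hsucc : ∀ i < n - 1, permVal π i < permVal π (Order.succ i) := fun i hi => by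
      have hasc := filter_eq_empty_iff.1 (card_eq_zero.1 h) (mem_range.2 (by omega : i < n))
      have hne := (permVal_inj π (i := i) (j := i + 1) (by omega) (by omega)).not.2 (by omega)
      rw [Order.succ_eq_add_one]
      push Not at hasc
      have := hasc (by omega)
      omega
    have hmono : StrictMono π := fun a b hab => by
      have := strictMonoOn_Iic_of_lt_succ hsucc (Set.mem_Iic.2 (by omega : a.val ≤ n - 1))
        (Set.mem_Iic.2 (by omega : b.val ≤ n - 1)) hab
      simpa [permVal_of_lt π a.2, permVal_of_lt π b.2] using this
    exact Equiv.ext fun x => hmono.apply_eq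
  · rintro rfl
    refine card_eq_zero.2 <| filter_eq_empty_iff.2 fun i hi h => ?_
    rw [permVal_one (by omega), permVal_one (mem_range.1 hi)] at h
    omega

theorem desc_pos_of_occ21_3_pos {π : Perm (Fin n)} (h : 0 < occ21_3 π) : 0 < desc π := by
  obtain ⟨⟨i, j⟩, hij⟩ := card_pos.1 h
  simp only [mem_filter, mem_product, mem_range] at hij
  exact card_pos.2 ⟨i, mem_filter.2 ⟨mem_range.2 (by omega), by omega, hij.2.2.1⟩⟩

theorem occ21_3_one : occ21_3 (1 : Perm (Fin n)) = 0 :=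
  Nat.eq_zero_of_not_pos fun h => (desc_pos_of_occ21_3_pos h).ne' (desc_eq_zero_iff.2 rfl)

theorem occ13_2_one : occ13_2 (1 : Perm (Fin n)) = 0 := by
  refine card_eq_zero.2 <| filter_eq_empty_iff.2 fun p hp h => ?_
  simp only [mem_product, mem_range] at hp
  rw [permVal_one (i := p.1) (by omega), permVal_one (i := p.1 + 1) (by omega),
    permVal_one hp.2] at h
  omega

end Descents

section Join

variable {m k : ℕ} (α : Perm (Fin m)) (β : Perm (Fin k))

noncomputable def join : Perm (Fin (m + k + 1)) :=
  permOfFun (m + k + 1)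
    (fun i => if i < m then k + permVal α i else if i = m then m + k else permVal β (i - (m + 1)))
    (fun i hi => by
      split_ifs with h1 h2
      · have := permVal_lt α h1; omega
      · omega
      · have := permVal_lt β (show i - (m + 1) < k by omega); omega)
    (fun i hi j hj h => by
      have hαi : i < m → permVal α i < m := permVal_lt α
      have hαj : j < m → permVal α j < m := permVal_lt α
      have hβi : m < i → permVal β (i - (m + 1)) < k := fun _ => permVal_lt β (by omega)
      have hβj : m < j → permVal β (j - (m + 1)) < k := fun _ => permVal_lt β (by omega)
      have iα : i < m → j < m → permVal α i = permVal α j → i = j :=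
        fun hi hj => (permVal_inj α hi hj).1
      have iβ : m < i → m < j → permVal β (i - (m + 1)) = permVal β (j - (m + 1)) → i = j :=
        fun _ _ h => by have := (permVal_inj β (by omega) (by omega)).1 h; omega
      split_ifs at h <;> omega)

variable {α β}

theorem permVal_join_of_lt {i : ℕ} (hi : i < m) : permVal (join α β) i = k + permVal α i := by
  rw [join, permVal_permOfFun _ _ (by omega), if_pos hi]

theorem permVal_join_self : permVal (join α β) m = m + k := by
  rw [join, permVal_permOfFun _ _ (by omega), if_neg (lt_irrefl m), if_pos rfl]

theorem permVal_join_add {t : ℕ} (ht : t < k) :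
    permVal (join α β) (m + 1 + t) = permVal β t := by
  rw [join, permVal_permOfFun _ _ (by omega), if_neg (by omega), if_neg (by omega)]
  congr 1
  omega

theorem join_injective {α' : Perm (Fin m)} {β' : Perm (Fin k)} (h : join α β = join α' β') :
    α = α' ∧ β = β' := by
  refine ⟨eq_of_permVal_eq fun i hi => ?_, eq_of_permVal_eq fun t ht => ?_⟩
  · have := permVal_join_of_lt (α := α) (β := β) hi
    rw [h, permVal_join_of_lt hi] at this
    omega
  · rw [← permVal_join_add (α := α) ht, h, permVal_join_add ht]

end Join

section Split

variable {m k : ℕ}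

theorem sum_range_add_add_one {M : Type*} [AddCommMonoid M] (f : ℕ → M) :
    ∑ i ∈ range (m + k + 1), f i = ∑ i ∈ range m, f i + f m + ∑ t ∈ range k, f (m + 1 + t) := by
  rw [add_right_comm, sum_range_add, sum_range_succ]

theorem card_filter_range_add_add_one (R : ℕ → Prop) [DecidablePred R] :
    #{i ∈ range (m + k + 1) | R i} =
      #{i ∈ range m | R i} + (if R m then 1 else 0) + #{t ∈ range k | R (m + 1 + t)} := by
  simp only [card_filter, sum_range_add_add_one]

end Split

section PatternCount

variable {n : ℕ} (P : ℕ → ℕ → ℕ → Prop) [∀ a b c, Decidable (P a b c)]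

/-- Occurrences `(i, j)` of a pattern `xy-z` whose values `π i, π (i + 1), π j` satisfy `P`. -/
def patternCount (π : Perm (Fin n)) : ℕ :=
  #{p ∈ range n ×ˢ range n |
    p.1 + 1 < p.2 ∧ P (permVal π p.1) (permVal π (p.1 + 1)) (permVal π p.2)}

def patternCountAt (π : Perm (Fin n)) (i : ℕ) : ℕ :=
  #{j ∈ range n | i + 1 < j ∧ P (permVal π i) (permVal π (i + 1)) (permVal π j)}

theorem patternCount_eq_sum (π : Perm (Fin n)) :
    patternCount P π = ∑ i ∈ range n, patternCountAt P π i := by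
  simp only [patternCount, patternCountAt, card_filter, sum_product]

theorem occ13_2_eq_patternCount (π : Perm (Fin n)) :
    occ13_2 π = patternCount (fun a b c => a < c ∧ c < b) π := rfl

theorem occ21_3_eq_patternCount (π : Perm (Fin n)) :
    occ21_3 π = patternCount (fun a b c => b < a ∧ a < c) π := rfl

end PatternCount

section JoinCount

variable {m k : ℕ} {α : Perm (Fin m)} {β : Perm (Fin k)}
  (P : ℕ → ℕ → ℕ → Prop) [∀ a b c, Decidable (P a b c)]

theorem patternCountAt_join_of_lt (hlt : ∀ a b c, P a b c → a < c)
    (hadd : ∀ a b c, P (k + a) (k + b) (k + c) ↔ P a b c) {i : ℕ} (hi : i < m) :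
    patternCountAt P (join α β) i = patternCountAt P α i +
      if i + 1 < m ∧ P (k + permVal α i) (k + permVal α (i + 1)) (m + k) then 1 else 0 := by
  rw [patternCountAt, card_filter_range_add_add_one, permVal_join_self, permVal_join_of_lt hi]
  have hβ : #{t ∈ range k | i + 1 < m + 1 + t ∧ P (k + permVal α i)
      (permVal (join α β) (i + 1)) (permVal (join α β) (m + 1 + t))} = 0 := by
    refine card_eq_zero.2 <| filter_eq_empty_iff.2 fun t ht h => ?_
    rw [mem_range] at ht
    have hP := hlt _ _ _ h.2
    rw [permVal_join_add ht] at hP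
    have := permVal_lt β ht
    omega
  rw [hβ, add_zero]
  congr 1
  · refine congrArg card <| filter_congr fun j hj => and_congr_right fun hij => ?_
    rw [mem_range] at hj
    rw [permVal_join_of_lt (i := i + 1) (by omega), permVal_join_of_lt hj, hadd]
  · by_cases h : i + 1 < m
    · simp only [h, true_and, permVal_join_of_lt h]
    · simp only [h, false_and]

theorem patternCountAt_join_self (hlt : ∀ a b c, P a b c → a < c) :
    patternCountAt P (join α β) m = 0 := by
  refine card_eq_zero.2 <| filter_eq_empty_iff.2 fun j hj h => ?_
  rw [mem_range] at hj
  have hP := hlt _ _ _ h.2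
  rw [permVal_join_self] at hP
  have := permVal_lt (join α β) hj
  omega

theorem patternCountAt_join_add {s : ℕ} (hs : s < k) :
    patternCountAt P (join α β) (m + 1 + s) = patternCountAt P β s := by
  rw [patternCountAt, card_filter_range_add_add_one, if_neg (by omega), add_zero]
  have hα : #{j ∈ range m | m + 1 + s + 1 < j ∧ P (permVal (join α β) (m + 1 + s))
      (permVal (join α β) (m + 1 + s + 1)) (permVal (join α β) j)} = 0 :=
    card_eq_zero.2 <| filter_eq_empty_iff.2 fun j hj h => by rw [mem_range] at hj; omega
  rw [hα, zero_add]
  refine congrArg card <| filter_congr fun t ht => ?_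
  rw [show m + 1 + s + 1 < m + 1 + t ↔ s + 1 < t by omega]
  refine and_congr_right fun hst => ?_
  rw [mem_range] at ht
  rw [show m + 1 + s + 1 = m + 1 + (s + 1) by omega, permVal_join_add hs,
    permVal_join_add (by omega), permVal_join_add ht]

/-- `hlt` rules out occurrences that straddle the maximum; the middle term counts those that
end at it. -/
theorem patternCount_join (hlt : ∀ a b c, P a b c → a < c)
    (hadd : ∀ a b c, P (k + a) (k + b) (k + c) ↔ P a b c) :
    patternCount P (join α β) = patternCount P α +
      #{i ∈ range m | i + 1 < m ∧ P (k + permVal α i) (k + permVal α (i + 1)) (m + k)} +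
        patternCount P β := by
  rw [patternCount_eq_sum, patternCount_eq_sum P α, patternCount_eq_sum P β,
    sum_range_add_add_one, patternCountAt_join_self P hlt, add_zero,
    sum_congr rfl fun i hi => patternCountAt_join_of_lt P hlt hadd (mem_range.1 hi),
    sum_add_distrib, card_filter,
    sum_congr rfl fun s hs => patternCountAt_join_add P (mem_range.1 hs)]

theorem occ13_2_join : occ13_2 (join α β) = occ13_2 α + occ13_2 β := by
  simp only [occ13_2_eq_patternCount]
  rw [patternCount_join _ (fun _ _ _ h => h.1) (fun _ _ _ => by omega), add_left_inj,
    add_eq_left, card_eq_zero, filter_eq_empty_iff]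
  intro i hi h
  have := permVal_lt α (i := i + 1) h.1
  omega

theorem occ21_3_join : occ21_3 (join α β) = occ21_3 α + desc α + occ21_3 β := by
  simp only [occ21_3_eq_patternCount]
  rw [patternCount_join _ (fun _ _ _ h => h.2) (fun _ _ _ => by omega), desc]
  congr 2
  refine congrArg card <| filter_congr fun i hi => and_congr_right fun _ => ?_
  have := permVal_lt α (mem_range.1 hi)
  omega

theorem desc_join : desc (join α β) = desc α + (if 0 < k then 1 else 0) + desc β := by
  rw [desc, card_filter_range_add_add_one, permVal_join_self]
  congr 1
  congr 1
  · refine congrArg card <| filter_congr fun i hi => ?_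
    rw [mem_range] at hi
    by_cases h : i + 1 < m
    · rw [permVal_join_of_lt h, permVal_join_of_lt hi]
      omega
    · rw [show i + 1 = m by omega, permVal_join_self, permVal_join_of_lt hi]
      have := permVal_lt α hi
      omega
  · by_cases hk : 0 < k
    · have hβ := permVal_lt β hk
      have h0 := permVal_join_add (α := α) (β := β) hk
      rw [add_zero] at h0
      rw [if_pos hk, if_pos ⟨by omega, by omega⟩]
    · rw [if_neg hk, if_neg (by omega)]
  · refine congrArg card <| filter_congr fun t ht => ?_
    rw [mem_range] at ht
    rw [show m + 1 + t + 1 < m + k + 1 ↔ t + 1 < k by omega]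
    refine and_congr_right fun ht' => ?_
    rw [show m + 1 + t + 1 = m + 1 + (t + 1) by omega, permVal_join_add ht, permVal_join_add ht']

end JoinCount

theorem permVal_lt_of_occ13_2_eq_zero {n m : ℕ} {σ : Perm (Fin n)} (h0 : occ13_2 σ = 0)
    (hmax : permVal σ m = n - 1) {i j : ℕ} (hi : i < m) (hmj : m < j) (hj : j < n) :
    permVal σ j < permVal σ i := by
  have hne : ∀ i < n, i ≠ j → permVal σ i ≠ permVal σ j := fun i hi hij =>
    (permVal_inj σ hi hj).not.2 hij
  refine Nat.decreasingInduction (motive := fun i _ => permVal σ j < permVal σ i)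
    (fun i hi ih => ?_) ?_ hi.le
  · have hno := filter_eq_empty_iff.1 (card_eq_zero.1 h0)
      (mem_product.2 ⟨mem_range.2 (by omega), mem_range.2 hj⟩ : (i, j) ∈ range n ×ˢ range n)
    have := hne i (by omega) (by omega)
    simp only [not_and] at hno
    have := hno (by omega)
    omega
  · have := permVal_lt σ hj
    have := hne m (by omega) (by omega)
    omega

section Decomposition

variable {m k : ℕ} {σ : Perm (Fin (m + k + 1))}

theorem le_permVal_of_occ13_2_eq_zero (h0 : occ13_2 σ = 0) (hmax : permVal σ m = m + k)
    {i : ℕ} (hi : i < m) : k ≤ permVal σ i := by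
  have := card_le_card_of_permVal_mem σ (s := Ioo m (m + k + 1))
    (t := range (permVal σ i)) (fun j hj => (mem_Ioo.1 hj).2)
    (fun j hj => mem_range.2 <|
      permVal_lt_of_occ13_2_eq_zero h0 hmax hi (mem_Ioo.1 hj).1 (mem_Ioo.1 hj).2)
  simp only [Nat.card_Ioo, card_range] at this
  omega

theorem permVal_add_lt_of_occ13_2_eq_zero (h0 : occ13_2 σ = 0) (hmax : permVal σ m = m + k)
    {t : ℕ} (ht : t < k) : permVal σ (m + 1 + t) < k := by
  have hβ := permVal_lt σ (i := m + 1 + t) (by omega)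
  have := card_le_card_of_permVal_mem σ (s := range (m + 1))
    (t := Ioo (permVal σ (m + 1 + t)) (m + k + 1)) (fun i hi => by simp at hi; omega)
    (fun i hi => by
      rw [mem_range] at hi
      rcases Nat.lt_succ_iff_lt_or_eq.1 hi with hi | hi
      · exact mem_Ioo.2 ⟨permVal_lt_of_occ13_2_eq_zero h0 hmax hi (by omega) (by omega),
          permVal_lt σ (by omega)⟩
      · have := (permVal_inj σ (i := m + 1 + t) (j := m) (by omega) (by omega)).not.2 (by omega)
        rw [hi]
        exact mem_Ioo.2 ⟨by omega, by omega⟩)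
  simp only [card_range, Nat.card_Ioo] at this
  omega

theorem exists_join_of_occ13_2_eq_zero (h0 : occ13_2 σ = 0) (hmax : permVal σ m = m + k) :
    ∃ α β, join α β = σ := by
  have hlow := fun i => le_permVal_of_occ13_2_eq_zero h0 hmax (i := i)
  refine ⟨permOfFun m (fun i => permVal σ i - k) (fun i hi => ?_) (fun i hi j hj h => ?_),
    permOfFun k (fun t => permVal σ (m + 1 + t))
      (fun t ht => permVal_add_lt_of_occ13_2_eq_zero h0 hmax ht)
      (fun s hs t ht h => by have := (permVal_inj σ (by omega) (by omega)).1 h; omega), ?_⟩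
  · have := permVal_lt σ (i := i) (by omega)
    have := (permVal_inj σ (i := i) (j := m) (by omega) (by omega)).not.2 (by omega)
    omega
  · have := hlow i hi
    have := hlow j hj
    exact (permVal_inj σ (by omega) (by omega)).1 (by omega)
  · refine eq_of_permVal_eq fun i hi => ?_
    rcases lt_trichotomy i m with him | rfl | him
    · rw [permVal_join_of_lt him, permVal_permOfFun _ _ him]
      have := hlow i him
      omega
    · rw [permVal_join_self, hmax]
    · obtain ⟨t, rfl⟩ : ∃ t, i = m + 1 + t := ⟨i - (m + 1), by omega⟩
      rw [permVal_join_add (by omega), permVal_permOfFun _ _ (by omega)]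

theorem card_filter_maxAt_eq_card_filter_join (Q : Perm (Fin (m + k + 1)) → Prop)
    [DecidablePred Q] :
    #{σ | permVal σ m = m + k ∧ occ13_2 σ = 0 ∧ Q σ} =
      #{p : Perm (Fin m) × Perm (Fin k) |
        occ13_2 p.1 = 0 ∧ occ13_2 p.2 = 0 ∧ Q (join p.1 p.2)} := by
  symm
  refine card_bij (fun p _ => join p.1 p.2) ?_ ?_ ?_
  · rintro ⟨α, β⟩ hp
    simp only [mem_filter, mem_univ, true_and] at hp ⊢
    exact ⟨permVal_join_self, by rw [occ13_2_join, hp.1, hp.2.1], hp.2.2⟩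
  · rintro ⟨α, β⟩ - ⟨α', β'⟩ - h
    obtain ⟨rfl, rfl⟩ := join_injective h
    rfl
  · intro σ hσ
    simp only [mem_filter, mem_univ, true_and] at hσ
    obtain ⟨α, β, rfl⟩ := exists_join_of_occ13_2_eq_zero hσ.2.1 hσ.1
    rw [occ13_2_join] at hσ
    refine ⟨(α, β), mem_filter.2 ⟨mem_univ _, ?_⟩, rfl⟩
    dsimp only
    exact ⟨by omega, by omega, hσ.2.2⟩

end Decomposition

theorem card_filter_eq_sum_card_filter_maxAt {N : ℕ} (Q : Perm (Fin (N + 1)) → Prop)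
    [DecidablePred Q] :
    #{σ | Q σ} = ∑ m ∈ range (N + 1), #{σ | permVal σ m = N ∧ Q σ} := by
  rw [card_eq_sum_card_fiberwise (f := fun σ : Perm (Fin (N + 1)) => (σ⁻¹ (Fin.last N) : ℕ))
    (t := range (N + 1)) fun σ _ => mem_range.2 (Fin.isLt _)]
  refine sum_congr rfl fun m hm => congrArg card ?_
  rw [filter_filter]
  refine filter_congr fun σ _ => ?_
  rw [mem_range] at hm
  rw [permVal_of_lt σ hm, and_comm]
  refine and_congr_left fun _ => ⟨fun h => ?_, fun h => ?_⟩
  · rw [← Perm.inv_eq_iff_eq.1 (Fin.ext h : σ⁻¹ (Fin.last N) = ⟨m, hm⟩), Fin.val_last]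
  · rw [Perm.inv_eq_iff_eq.2 (Fin.ext h : σ ⟨m, hm⟩ = Fin.last N).symm]

theorem card_filter_occ13_2_eq_sum_antidiagonal (Q : ∀ {n : ℕ}, Perm (Fin n) → Prop)
    [∀ n, DecidablePred (@Q n)] (N : ℕ) :
    #{σ : Perm (Fin (N + 1)) | occ13_2 σ = 0 ∧ Q σ} =
      ∑ p ∈ antidiagonal N, #{q : Perm (Fin p.1) × Perm (Fin p.2) |
        occ13_2 q.1 = 0 ∧ occ13_2 q.2 = 0 ∧ Q (join q.1 q.2)} := by
  rw [card_filter_eq_sum_card_filter_maxAt, Finset.Nat.sum_antidiagonal_eq_sum_range_succ_mk]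
  refine sum_congr rfl fun m hm => ?_
  obtain ⟨k, rfl⟩ : ∃ k, N = m + k := ⟨N - m, by rw [mem_range] at hm; omega⟩
  rw [Nat.add_sub_cancel_left]
  exact card_filter_maxAt_eq_card_filter_join _

theorem card_filter_prod {α β : Type*} [Fintype α] [Fintype β] (A : α → Prop) (B : β → Prop)
    [DecidablePred A] [DecidablePred B] :
    #{p : α × β | A p.1 ∧ B p.2} = #{a | A a} * #{b | B b} := by
  rw [← card_product, ← filter_product, univ_product_univ]

def avoidCount (n : ℕ) : ℕ := #{σ : Perm (Fin n) | occ13_2 σ = 0 ∧ occ21_3 σ = 0}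

def avoidOneDescentCount (n : ℕ) : ℕ :=
  #{σ : Perm (Fin n) | occ13_2 σ = 0 ∧ occ21_3 σ = 0 ∧ desc σ = 1}

def oneOccCount (n : ℕ) : ℕ := #{σ : Perm (Fin n) | occ13_2 σ = 0 ∧ occ21_3 σ = 1}

section Fibers

variable {m k : ℕ}

theorem card_filter_join_avoid :
    #{q : Perm (Fin m) × Perm (Fin k) |
      occ13_2 q.1 = 0 ∧ occ13_2 q.2 = 0 ∧ occ21_3 (join q.1 q.2) = 0} = avoidCount k := by
  calc _ = #{q : Perm (Fin m) × Perm (Fin k) | q.1 = 1 ∧ (occ13_2 q.2 = 0 ∧ occ21_3 q.2 = 0)} := by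
        refine congrArg card <| filter_congr fun q _ => ?_
        rw [occ21_3_join]
        constructor
        · rintro ⟨-, h2, h3⟩
          exact ⟨desc_eq_zero_iff.1 (by omega), h2, by omega⟩
        · rintro ⟨h1, h2, h3⟩
          rw [h1, occ13_2_one, occ21_3_one, desc_eq_zero_iff.2 rfl, h3]
          exact ⟨rfl, h2, rfl⟩
    _ = avoidCount k := by
      rw [card_filter_prod (· = 1) (fun β => occ13_2 β = 0 ∧ occ21_3 β = 0), filter_eq',
        if_pos (mem_univ _), card_singleton, one_mul, avoidCount]

theorem card_filter_join_avoid_one_desc :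
    #{q : Perm (Fin m) × Perm (Fin k) | occ13_2 q.1 = 0 ∧ occ13_2 q.2 = 0 ∧
      (occ21_3 (join q.1 q.2) = 0 ∧ desc (join q.1 q.2) = 1)} = if 0 < k then 1 else 0 := by
  simp_rw [occ21_3_join, desc_join]
  by_cases hk : 0 < k
  · simp only [hk, if_true]
    refine card_eq_one.2 ⟨(1, 1), eq_singleton_iff_unique_mem.2 ⟨?_, fun q hq => ?_⟩⟩
    · simp [occ13_2_one, occ21_3_one, desc_eq_zero_iff.2]
    · simp only [mem_filter, mem_univ, true_and] at hq
      exact Prod.ext (desc_eq_zero_iff.1 (by omega)) (desc_eq_zero_iff.1 (by omega))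
  · rw [if_neg hk]
    refine card_eq_zero.2 <| filter_eq_empty_iff.2 fun q _ h => ?_
    have := desc_le q.2
    omega

theorem card_filter_join_one_occ :
    #{q : Perm (Fin m) × Perm (Fin k) |
      occ13_2 q.1 = 0 ∧ occ13_2 q.2 = 0 ∧ occ21_3 (join q.1 q.2) = 1} =
      avoidOneDescentCount m * avoidCount k + oneOccCount k := by
  calc _ = #{q : Perm (Fin m) × Perm (Fin k) |
        ((occ13_2 q.1 = 0 ∧ occ21_3 q.1 = 0 ∧ desc q.1 = 1) ∧
          (occ13_2 q.2 = 0 ∧ occ21_3 q.2 = 0)) ∨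
          (q.1 = 1 ∧ (occ13_2 q.2 = 0 ∧ occ21_3 q.2 = 1))} := by
        refine congrArg card <| filter_congr fun q _ => ?_
        rw [occ21_3_join]
        constructor
        · rintro ⟨h1, h2, h3⟩
          by_cases hd : desc q.1 = 0
          · have h1 := desc_eq_zero_iff.1 hd
            rw [h1, occ21_3_one, desc_eq_zero_iff.2 rfl] at h3
            exact Or.inr ⟨h1, h2, by omega⟩
          · exact Or.inl ⟨⟨h1, by omega, by omega⟩, h2, by omega⟩
        · rintro (⟨⟨h1, h2, h3⟩, h4, h5⟩ | ⟨h1, h2, h3⟩)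
          · exact ⟨h1, h4, by omega⟩
          · rw [h1, occ13_2_one, occ21_3_one, desc_eq_zero_iff.2 rfl]
            exact ⟨rfl, h2, by omega⟩
    _ = _ := by
      rw [filter_or, card_union_of_disjoint,
        card_filter_prod (fun α => occ13_2 α = 0 ∧ occ21_3 α = 0 ∧ desc α = 1)
          (fun β => occ13_2 β = 0 ∧ occ21_3 β = 0),
        card_filter_prod (· = 1) (fun β => occ13_2 β = 0 ∧ occ21_3 β = 1), filter_eq',
        if_pos (mem_univ _), card_singleton, one_mul]
      · rfl
      · refine disjoint_filter.2 fun q _ h1 h2 => ?_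
        rw [h2.1, desc_eq_zero_iff.2 rfl] at h1
        exact absurd h1.1.2.2 zero_ne_one

end Fibers

theorem avoidCount_zero : avoidCount 0 = 1 := by
  rw [avoidCount, filter_true_of_mem fun σ _ => ?_, card_univ, Fintype.card_perm]
  · rfl
  · rw [Subsingleton.elim σ 1]
    exact ⟨occ13_2_one, occ21_3_one⟩

theorem avoidCount_succ (N : ℕ) :
    avoidCount (N + 1) = ∑ p ∈ antidiagonal N, avoidCount p.2 := by
  rw [avoidCount, card_filter_occ13_2_eq_sum_antidiagonal (fun σ => occ21_3 σ = 0)]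
  exact sum_congr rfl fun p _ => card_filter_join_avoid

theorem avoidCount_succ_eq_two_pow (N : ℕ) : avoidCount (N + 1) = 2 ^ N := by
  induction N with
  | zero => simp [avoidCount_succ, avoidCount_zero]
  | succ N ih =>
    rw [avoidCount_succ, Finset.Nat.sum_antidiagonal_succ, ← avoidCount_succ, ih, pow_succ]
    ring

theorem avoidOneDescentCount_eq (n : ℕ) : avoidOneDescentCount n = n - 1 := by
  cases n with
  | zero =>
    refine card_eq_zero.2 <| filter_eq_empty_iff.2 fun σ _ h => ?_
    have := desc_le σ
    omega
  | succ N =>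
    rw [avoidOneDescentCount,
      card_filter_occ13_2_eq_sum_antidiagonal (fun σ => occ21_3 σ = 0 ∧ desc σ = 1),
      sum_congr rfl fun p _ => card_filter_join_avoid_one_desc, Nat.add_sub_cancel]
    induction N with
    | zero => simp
    | succ N ih =>
      rw [Finset.Nat.sum_antidiagonal_succ, ih, if_pos N.succ_pos, add_comm]

theorem oneOccCount_succ (N : ℕ) :
    oneOccCount (N + 1) = ∑ p ∈ antidiagonal N,
      (avoidOneDescentCount p.1 * avoidCount p.2 + oneOccCount p.2) := by
  rw [oneOccCount, card_filter_occ13_2_eq_sum_antidiagonal (fun σ => occ21_3 σ = 1)]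
  exact sum_congr rfl fun p _ => card_filter_join_one_occ

theorem sum_antidiagonal_mul_avoidCount (N : ℕ) :
    ∑ p ∈ antidiagonal N, p.1 * avoidCount p.2 + 1 = 2 ^ N := by
  induction N with
  | zero => simp
  | succ N ih =>
    rw [Finset.Nat.sum_antidiagonal_succ]
    simp only [zero_mul, zero_add, add_mul, one_mul, sum_add_distrib]
    rw [← avoidCount_succ, avoidCount_succ_eq_two_pow, pow_succ]
    omega

theorem sum_antidiagonal_avoidOneDescentCount_mul (N : ℕ) :
    ∑ p ∈ antidiagonal (N + 1), avoidOneDescentCount p.1 * avoidCount p.2 + 1 = 2 ^ N := by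
  rw [Finset.Nat.sum_antidiagonal_succ]
  simp only [avoidOneDescentCount_eq, Nat.add_sub_cancel, zero_tsub, zero_mul, zero_add]
  exact sum_antidiagonal_mul_avoidCount N

theorem oneOccCount_add_three (N : ℕ) :
    oneOccCount (N + 3) = 2 * oneOccCount (N + 2) + 2 ^ N := by
  have h3 := oneOccCount_succ (N + 1 + 1)
  have h2 := oneOccCount_succ (N + 1)
  rw [sum_add_distrib] at h2 h3
  rw [Finset.Nat.sum_antidiagonal_succ (f := fun p => oneOccCount p.2)] at h3
  dsimp only at h3
  have t2 := sum_antidiagonal_avoidOneDescentCount_mul N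
  have t3 := sum_antidiagonal_avoidOneDescentCount_mul (N + 1)
  have := pow_succ 2 N
  change oneOccCount (N + 1 + 1 + 1) = 2 * oneOccCount (N + 1 + 1) + 2 ^ N
  omega

theorem oneOccCount_eq_zero_of_le_two {n : ℕ} (hn : n ≤ 2) : oneOccCount n = 0 := by
  refine card_eq_zero.2 <| filter_eq_empty_iff.2 fun σ _ h => ?_
  have : occ21_3 σ = 0 := card_eq_zero.2 <| filter_eq_empty_iff.2 fun p hp h => by
    simp only [mem_product, mem_range] at hp
    omega
  omega

theorem oneOccCount_add_three_eq (N : ℕ) : oneOccCount (N + 3) = (N + 1) * 2 ^ N := by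
  induction N with
  | zero => rw [oneOccCount_add_three, oneOccCount_eq_zero_of_le_two le_rfl]; rfl
  | succ N ih =>
    rw [oneOccCount_add_three, ih, pow_succ]
    ring

theorem stmt11_general (n : ℕ) :
    (Finset.univ.filter (fun π : Equiv.Perm (Fin n) =>
      occ13_2 π = 0 ∧ occ21_3 π = 1)).card = (n - 2) * 2 ^ (n - 3) := by
  change oneOccCount n = _
  rcases le_or_gt n 2 with hn | hn
  · rw [oneOccCount_eq_zero_of_le_two hn, Nat.sub_eq_zero_of_le hn, zero_mul]
  · obtain ⟨N, rfl⟩ : ∃ N, n = N + 3 := ⟨n - 3, by omega⟩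
    rw [oneOccCount_add_three_eq, show N + 3 - 2 = N + 1 by omega, Nat.add_sub_cancel]

theorem stmt11 (n : ℕ) (hn : 2 ≤ n) :
    (Finset.univ.filter (fun π : Equiv.Perm (Fin n) =>
      occ13_2 π = 0 ∧ occ21_3 π = 1)).card = (n - 2) * 2 ^ (n - 3) :=
  stmt11_general n
end

section
/- For every n ≥ 1, the number of permutations of {1,...,n} avoiding the generalized pattern 13-2 and avoiding the generalized pattern 32-1 equals 1 + n(n-1)/2. -/
/-- target value function -/
def vt (a c i : ℕ) : ℕ := if i < c then i + a else if i < a + c then i - c else i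

lemma vt_lt {n a c i : ℕ} (h : a + c ≤ n) (hi : i < n) : vt a c i < n := by
  unfold vt; split_ifs <;> omega

lemma vt_inv (a c i : ℕ) : vt c a (vt a c i) = i := by
  unfold vt; split_ifs <;> omega

def g (n a c : ℕ) : Equiv.Perm (Fin n) :=
  if h : a + c ≤ n then
    { toFun := fun i => ⟨vt a c i, vt_lt h i.2⟩
      invFun := fun i => ⟨vt c a i, vt_lt (by omega) i.2⟩
      left_inv := fun i => by ext; exact vt_inv a c i
      right_inv := fun i => by ext; exact vt_inv c a i }
  else 1

lemma g_val {n a c : ℕ} (h : a + c ≤ n) (i : ℕ) (hi : i < n) :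
    permVal (g n a c) i = vt a c i := by
  unfold permVal g
  rw [dif_pos hi, dif_pos h]; rfl
lemma occ13_2_zero {n : ℕ} (π : Equiv.Perm (Fin n)) : occ13_2 π = 0 ↔
    ∀ i j, i + 1 < j → j < n →
      ¬(permVal π i < permVal π j ∧ permVal π j < permVal π (i+1)) := by
  unfold occ13_2
  rw [Finset.card_eq_zero, Finset.filter_eq_empty_iff]
  constructor
  · intro h i j hij hj hc
    exact h (show (i, j) ∈ Finset.range n ×ˢ Finset.range n from
      Finset.mem_product.mpr ⟨Finset.mem_range.mpr (by omega), Finset.mem_range.mpr hj⟩)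
      ⟨hij, hc.1, hc.2⟩
  · rintro h p hp ⟨h1, h2, h3⟩
    exact h p.1 p.2 h1 (Finset.mem_range.mp (Finset.mem_product.mp hp).2) ⟨h2, h3⟩

lemma occ32_1_zero {n : ℕ} (π : Equiv.Perm (Fin n)) : occ32_1 π = 0 ↔
    ∀ i j, i + 1 < j → j < n →
      ¬(permVal π j < permVal π (i+1) ∧ permVal π (i+1) < permVal π i) := by
  unfold occ32_1
  rw [Finset.card_eq_zero, Finset.filter_eq_empty_iff]
  constructor
  · intro h i j hij hj hc
    exact h (show (i, j) ∈ Finset.range n ×ˢ Finset.range n from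
      Finset.mem_product.mpr ⟨Finset.mem_range.mpr (by omega), Finset.mem_range.mpr hj⟩)
      ⟨hij, hc.1, hc.2⟩
  · rintro h p hp ⟨h1, h2, h3⟩
    exact h p.1 p.2 h1 (Finset.mem_range.mp (Finset.mem_product.mp hp).2) ⟨h2, h3⟩

lemma g_avoids {n a c : ℕ} (h : a + c ≤ n) :
    occ13_2 (g n a c) = 0 ∧ occ32_1 (g n a c) = 0 := by
  constructor
  · rw [occ13_2_zero]
    rintro i j hij hj ⟨h1, h2⟩
    rw [g_val h i (by omega), g_val h j hj] at h1
    rw [g_val h j hj, g_val h (i+1) (by omega)] at h2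
    unfold vt at h1 h2; split_ifs at h1 h2 <;> omega
  · rw [occ32_1_zero]
    rintro i j hij hj ⟨h1, h2⟩
    rw [g_val h j hj, g_val h (i+1) (by omega)] at h1
    rw [g_val h (i+1) (by omega), g_val h i (by omega)] at h2
    unfold vt at h1 h2; split_ifs at h1 h2 <;> omega
lemma complete {n : ℕ} (π : Equiv.Perm (Fin n)) (hn : 1 ≤ n)
    (h13 : ∀ i j, i + 1 < j → j < n →
      ¬(permVal π i < permVal π j ∧ permVal π j < permVal π (i+1)))
    (h32 : ∀ i j, i + 1 < j → j < n →
      ¬(permVal π j < permVal π (i+1) ∧ permVal π (i+1) < permVal π i)) :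
    ∃ a c, a + c ≤ n ∧ (a = 0 ↔ c = 0) ∧ ∀ i, i < n → permVal π i = vt a c i := by
  set w := permVal π with hw
  have wlt : ∀ i, i < n → w i < n := by
    intro i hi
    simp only [hw, permVal, dif_pos hi]
    exact (π ⟨i, hi⟩).2
  have winj : ∀ i j, i < n → j < n → w i = w j → i = j := by
    intro i j hi hj hij
    simp only [hw, permVal, dif_pos hi, dif_pos hj] at hij
    have := π.injective (Fin.ext hij)
    exact congrArg Fin.val this
  have wsurj : ∀ v, v < n → ∃ p, p < n ∧ w p = v := by
    intro v hv
    obtain ⟨i, hi⟩ := π.surjective ⟨v, hv⟩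
    refine ⟨i.1, i.2, ?_⟩
    simp only [hw, permVal, dif_pos i.2]
    rw [show (⟨i.1, i.2⟩ : Fin n) = i from Fin.ext rfl, hi]
  obtain ⟨c, hcn, hc0⟩ := wsurj 0 hn
  -- prefix lemma
  have hP : ∀ i, i + 1 < c → w (i+1) = w i + 1 := by
    intro i hic
    have hi1n : i + 1 < n := by omega
    have hin : i < n := by omega
    have hne0 : w (i+1) ≠ 0 := fun h0 => by
      have := winj (i+1) c hi1n hcn (h0.trans hc0.symm); omega
    have hasc : w i < w (i+1) := by
      rcases Nat.lt_trichotomy (w i) (w (i+1)) with h|h|h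
      · exact h
      · exact absurd (winj i (i+1) hin hi1n h) (by omega)
      · exact absurd ⟨by rw [hc0]; omega, h⟩ (h32 i c hic hcn)
    by_contra hgap
    have hgap2 : w i + 2 ≤ w (i+1) := by omega
    obtain ⟨p, hpn, hpv⟩ := wsurj (w (i+1) - 1) (by have := wlt (i+1) hi1n; omega)
    have hpne : p ≠ i + 1 := fun h => by subst h; omega
    have hpne2 : p ≠ i := fun h => by subst h; omega
    have hpi : p < i := by
      by_contra hpi
      exact h13 i p (by omega) hpn ⟨by omega, by omega⟩
    have hp1n : p + 1 < n := by omega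
    have hp1c : p + 1 < c := by omega
    rcases Nat.lt_trichotomy (w (p+1)) (w p) with h|h|h
    · have : w (p+1) ≠ 0 := fun h0 => by
        have := winj (p+1) c hp1n hcn (by rw [h0, hc0]); omega
      exact h32 p c hp1c hcn ⟨by rw [hc0]; omega, h⟩
    · exact absurd (winj (p+1) p hp1n hpn h) (by omega)
    · rcases Nat.lt_trichotomy (w (p+1)) (w (i+1)) with h2|h2|h2
      · omega
      · exact absurd (winj (p+1) (i+1) hp1n hi1n h2) (by omega)
      · exact h13 p (i+1) (by omega) hi1n ⟨by omega, h2⟩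
  set a := w 0 with ha
  have hPv : ∀ i, i < c → w i = a + i := by
    intro i
    induction i with
    | zero => intro _; omega
    | succ i ih =>
      intro h
      rw [hP i h, ih (by omega)]; omega
  have hacn : a + c ≤ n := by
    rcases Nat.eq_zero_or_pos c with h|h
    · have := wlt 0 hn; omega
    · have h1 := hPv (c-1) (by omega)
      have h2 := wlt (c-1) (by omega)
      omega
  have ha0c0 : a = 0 ↔ c = 0 := by
    constructor
    · intro h
      have : w 0 = w c := by rw [hc0]; omega
      have := winj 0 c hn hcn this
      omega
    · intro h
      have : w 0 = w c := by rw [h]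
      omega
  have hd : (a = 0 ∧ c = 0) ∨ (1 ≤ a ∧ 1 ≤ c) := by
    rcases Nat.eq_zero_or_pos a with h|h
    · exact Or.inl ⟨h, ha0c0.mp h⟩
    · refine Or.inr ⟨h, ?_⟩
      rcases Nat.eq_zero_or_pos c with h2|h2
      · exact absurd (ha0c0.mpr h2) (by omega)
      · exact h2
  -- suffix increasing
  have hQ : ∀ k, c + k < n → ∀ j, c + k < j → j < n → w (c+k) < w j := by
    intro k
    induction k with
    | zero =>
      intro _ j hj hjn
      have : w j ≠ 0 := fun h0 => by
        have := winj j c hjn hcn (h0.trans hc0.symm); omega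
      rw [Nat.add_zero, hc0]; omega
    | succ k ih =>
      intro hkn j hj hjn
      have hin : c + k < n := by omega
      obtain ⟨q, hqmem, hqmin⟩ := Finset.exists_min_image (Finset.Ico (c+k+1) n) w
        ⟨c+k+1, Finset.mem_Ico.mpr ⟨le_refl _, by omega⟩⟩
      rw [Finset.mem_Ico] at hqmem
      have hq1 : q = c + k + 1 := by
        by_contra hne
        have hqgt : c + k + 1 < q := by omega
        refine h13 (c+k) q (by omega) hqmem.2 ⟨ih hin q (by omega) hqmem.2, ?_⟩
        have hle := hqmin (c+k+1) (Finset.mem_Ico.mpr ⟨le_refl _, by omega⟩)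
        have hne2 : w q ≠ w (c+k+1) := fun h => hne (winj q (c+k+1) hqmem.2 (by omega) h)
        omega
      have hle := hqmin j (Finset.mem_Ico.mpr ⟨by omega, hjn⟩)
      have hne : w (c+(k+1)) ≠ w j := fun h => by
        have := winj (c+(k+1)) j (by omega) hjn h; omega
      rw [hq1] at hle
      rw [show c + (k+1) = c + k + 1 from rfl] at hne ⊢
      omega
  -- suffix values by strong induction
  have hW : ∀ k, c + k < n → w (c+k) = vt a c (c+k) := by
    intro k
    induction k using Nat.strong_induction_on with
    | _ k ihk =>
      intro hkn
      rcases Nat.eq_zero_or_pos k with hk0|hkpos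
      · subst hk0
        rw [Nat.add_zero, hc0]
        unfold vt; split_ifs <;> omega
      · have hii : c + k = (c + (k-1)) + 1 := by omega
        set i := c + (k-1) with hidef
        have hin : i < n := by omega
        have hprev : ∀ p, p ≤ i → p < n → w p = vt a c p := by
          intro p hp hpn
          rcases Nat.lt_or_ge p c with h|h
          · rw [hPv p h]; unfold vt; split_ifs <;> omega
          · have := ihk (p - c) (by omega) (by omega)
            rw [show c + (p-c) = p by omega] at this
            exact this
        have htval : vt a c (i+1) = if i + 1 < a + c then i + 1 - c else i + 1 := by
          unfold vt; split_ifs <;> omega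
        set t := vt a c (i+1) with ht
        have htn : t < n := by rw [htval]; split_ifs <;> omega
        have halpha : ∀ v, v < t → ∃ p, p ≤ i ∧ p < n ∧ w p = v := by
          intro v hv
          rw [htval] at hv
          rcases Nat.lt_or_ge (i+1) (a+c) with hb|hb
          · rw [if_pos hb] at hv
            refine ⟨c + v, by omega, by omega, ?_⟩
            rw [hprev (c+v) (by omega) (by omega)]
            unfold vt; split_ifs <;> omega
          · rw [if_neg (by omega)] at hv
            rcases Nat.lt_or_ge v a with hva|hva
            · refine ⟨c + v, by omega, by omega, ?_⟩
              rw [hprev (c+v) (by omega) (by omega)]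
              unfold vt; split_ifs <;> omega
            · rcases Nat.lt_or_ge v (a+c) with hvb|hvb
              · refine ⟨v - a, by omega, by omega, ?_⟩
                rw [hprev (v-a) (by omega) (by omega)]
                unfold vt; split_ifs <;> omega
              · refine ⟨v, by omega, by omega, ?_⟩
                rw [hprev v (by omega) (by omega)]
                unfold vt; split_ifs <;> omega
        have hbeta : ∀ p, p ≤ i → p < n → w p ≠ t := by
          intro p hp hpn heq
          rw [hprev p hp hpn, htval] at heq
          unfold vt at heq
          split_ifs at heq <;> omega
        obtain ⟨q, hqn, hqv⟩ := wsurj t htn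
        have hqgt : i + 1 ≤ q := by
          by_contra h
          exact hbeta q (by omega) hqn hqv
        rcases Nat.eq_or_lt_of_le hqgt with h|h
        · rw [hii, ← ht, h]
          exact hqv
        · exfalso
          have h1 : w (i+1) < w q := by
            have := hQ k hkn q (by omega) hqn
            rw [hii] at this
            exact this
          rw [hqv] at h1
          obtain ⟨p, hp1, hp2, hp3⟩ := halpha (w (i+1)) h1
          have := winj p (i+1) hp2 (by omega) hp3
          omega
  refine ⟨a, c, hacn, ha0c0, ?_⟩
  intro i hin
  rcases Nat.lt_or_ge i c with h|h
  · rw [hPv i h]; unfold vt; split_ifs <;> omega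
  · have := hW (i - c) (by omega)
    rw [show c + (i-c) = i by omega] at this
    exact this
lemma perm_eq {n : ℕ} (π ρ : Equiv.Perm (Fin n))
    (h : ∀ i, i < n → permVal π i = permVal ρ i) : π = ρ := by
  apply Equiv.ext
  intro i
  have := h i.1 i.2
  simp only [permVal, dif_pos i.2] at this
  exact Fin.ext this

lemma one_eq_g {n : ℕ} : (1 : Equiv.Perm (Fin n)) = g n 0 0 := by
  apply perm_eq
  intro i hi
  rw [g_val (by omega) i hi]
  simp [permVal, dif_pos hi, vt]

lemma card_pairs (n : ℕ) (hn : 1 ≤ n) :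
    ((Finset.range (n+1) ×ˢ Finset.range (n+1)).filter
      (fun p => 1 ≤ p.1 ∧ 1 ≤ p.2 ∧ p.1 + p.2 ≤ n)).card = n * (n-1) / 2 := by
  have hset : ((Finset.range (n+1) ×ˢ Finset.range (n+1)).filter
      (fun p => 1 ≤ p.1 ∧ 1 ≤ p.2 ∧ p.1 + p.2 ≤ n))
      = (Finset.Ico 1 n).biUnion (fun a => ({a} : Finset ℕ) ×ˢ Finset.Icc 1 (n - a)) := by
    ext ⟨x, y⟩
    simp only [Finset.mem_filter, Finset.mem_product, Finset.mem_range, Finset.mem_biUnion,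
      Finset.mem_Ico, Finset.mem_Icc, Finset.mem_singleton]
    constructor
    · rintro ⟨⟨hx, hy⟩, h1, h2, h3⟩
      exact ⟨x, ⟨h1, by omega⟩, rfl, h2, by omega⟩
    · rintro ⟨a, ⟨ha1, ha2⟩, rfl, hy1, hy2⟩
      refine ⟨⟨by omega, by omega⟩, by omega, by omega, by omega⟩
  rw [hset, Finset.card_biUnion]
  · have hterm : ∀ a ∈ Finset.Ico 1 n, (({a} : Finset ℕ) ×ˢ Finset.Icc 1 (n - a)).card = n - a := by
      intro a _
      rw [Finset.card_product, Finset.card_singleton, Nat.card_Icc]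
      omega
    rw [Finset.sum_congr rfl hterm]
    have h1 : ∑ a ∈ Finset.Ico 1 n, (n - a) = ∑ a ∈ Finset.Ico 1 n, a := by
      refine Finset.sum_nbij' (fun a => n - a) (fun a => n - a) ?_ ?_ ?_ ?_ ?_ <;>
        intro a ha <;> simp only [Finset.mem_Ico] at * <;> omega
    have h2 : Finset.range n = insert 0 (Finset.Ico 1 n) := by
      ext x
      simp only [Finset.mem_range, Finset.mem_insert, Finset.mem_Ico]
      omega
    have h3 : ∑ a ∈ Finset.range n, a = ∑ a ∈ Finset.Ico 1 n, a := by
      rw [h2, Finset.sum_insert (by simp)]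
      omega
    rw [h1, ← h3, Finset.sum_range_id]
  · intro a _ b _ hab
    simp only [Finset.disjoint_left]
    rintro ⟨x, y⟩ hx hy
    simp only [Finset.mem_product, Finset.mem_singleton] at hx hy
    exact hab (hx.1.symm.trans hy.1)
lemma g_vals_eq {n a c a' c' : ℕ} (h : a + c ≤ n) (h' : a' + c' ≤ n)
    (heq : g n a c = g n a' c') : ∀ i, i < n → vt a c i = vt a' c' i := by
  intro i hi
  have := congrArg (fun ρ => permVal ρ i) heq
  simpa [g_val h i hi, g_val h' i hi] using this

theorem stmt14' (n : ℕ) (hn : 1 ≤ n) :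
    (Finset.univ.filter (fun π : Equiv.Perm (Fin n) =>
      occ13_2 π = 0 ∧ occ32_1 π = 0)).card = 1 + n * (n - 1) / 2 := by
  classical
  set P : Finset (ℕ × ℕ) := (Finset.range (n+1) ×ˢ Finset.range (n+1)).filter
      (fun p => 1 ≤ p.1 ∧ 1 ≤ p.2 ∧ p.1 + p.2 ≤ n) with hP
  have hPmem : ∀ p : ℕ × ℕ, p ∈ P ↔ 1 ≤ p.1 ∧ 1 ≤ p.2 ∧ p.1 + p.2 ≤ n := by
    intro p
    rw [hP, Finset.mem_filter, Finset.mem_product, Finset.mem_range, Finset.mem_range]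
    constructor
    · rintro ⟨_, h⟩; exact h
    · rintro ⟨h1, h2, h3⟩; exact ⟨⟨by omega, by omega⟩, h1, h2, h3⟩
  have hset : (Finset.univ.filter (fun π : Equiv.Perm (Fin n) =>
      occ13_2 π = 0 ∧ occ32_1 π = 0))
      = insert 1 (P.image (fun p => g n p.1 p.2)) := by
    ext π
    rw [Finset.mem_filter, Finset.mem_insert, Finset.mem_image]
    simp only [Finset.mem_univ, true_and]
    constructor
    · rintro ⟨h1, h2⟩
      obtain ⟨a, c, hac, hiff, hval⟩ :=
        complete π hn ((occ13_2_zero π).mp h1) ((occ32_1_zero π).mp h2)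
      rcases Nat.eq_zero_or_pos a with h|h
      · left
        have hc := hiff.mp h
        subst h; subst hc
        refine perm_eq π 1 ?_
        intro i hi
        rw [hval i hi, one_eq_g, g_val (by omega) i hi]
      · right
        have hc : 1 ≤ c := by
          rcases Nat.eq_zero_or_pos c with h2|h2
          · exact absurd (hiff.mpr h2) (by omega)
          · exact h2
        refine ⟨(a, c), (hPmem (a, c)).mpr ⟨h, hc, hac⟩, ?_⟩
        refine (perm_eq π (g n a c) ?_).symm
        intro i hi
        rw [hval i hi, g_val hac i hi]
    · rintro (rfl | ⟨p, hp, rfl⟩)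
      · have := g_avoids (n := n) (a := 0) (c := 0) (by omega)
        rwa [← one_eq_g] at this
      · exact g_avoids ((hPmem p).mp hp).2.2
  have hnotmem : (1 : Equiv.Perm (Fin n)) ∉ P.image (fun p => g n p.1 p.2) := by
    rw [Finset.mem_image]
    rintro ⟨p, hp, hp1⟩
    obtain ⟨h1, h2, h3⟩ := (hPmem p).mp hp
    have := g_vals_eq h3 (by omega : 0 + 0 ≤ n) (hp1.trans one_eq_g) 0 hn
    unfold vt at this
    split_ifs at this <;> omega
  have hinj : Set.InjOn (fun p : ℕ × ℕ => g n p.1 p.2) P := by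
    rintro p hp q hq heq
    rw [Finset.mem_coe] at hp hq
    obtain ⟨hp1, hp2, hp3⟩ := (hPmem p).mp hp
    obtain ⟨hq1, hq2, hq3⟩ := (hPmem q).mp hq
    have hv := g_vals_eq hp3 hq3 heq
    have e0 := hv 0 hn
    have ha : p.1 = q.1 := by
      unfold vt at e0; split_ifs at e0 <;> omega
    have ec := hv p.2 (by omega)
    have hc : p.2 = q.2 := by
      unfold vt at ec; split_ifs at ec <;> omega
    exact Prod.ext ha hc
  rw [hset, Finset.card_insert_of_notMem hnotmem, Finset.card_image_of_injOn hinj,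
    card_pairs n hn]
  omega

theorem stmt14 (n : ℕ) (hn : 1 ≤ n) :
    (Finset.univ.filter (fun π : Equiv.Perm (Fin n) =>
      occ13_2 π = 0 ∧ occ32_1 π = 0)).card = 1 + n * (n - 1) / 2 := by
  exact stmt14' n hn
end

section
/- For every n ≥ 1, the number of permutations of {1,...,n} avoiding 13-2 and containing exactly one occurrence of 32-1 equals (n-1)(n-2)(2n-3)/6. -/
set_option maxHeartbeats 1000000


def wfun (A q s : ℕ) : ℕ := if s + 2 < A then s + 2 else s + q + 3

def vfun (A q t i : ℕ) : ℕ :=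
  if i ≤ q then A + i
  else if i = q + 1 then 1
  else if i < q + 2 + t then wfun A q (i - q - 2)
  else if i = q + 2 + t then 0
  else wfun A q (i - q - 3)


lemma vfun_lt {n A q t : ℕ} (hA : 2 ≤ A) (h1 : A + q + 1 ≤ n) (h2 : t + q + 3 ≤ n)
    {i : ℕ} (hi : i < n) : vfun A q t i < n := by
  simp only [vfun, wfun]; split_ifs <;> omega

lemma vfun_inj {n A q t : ℕ} (hA : 2 ≤ A) (h1 : A + q + 1 ≤ n) (h2 : t + q + 3 ≤ n)
    {i j : ℕ} (hi : i < n) (hj : j < n) (hv : vfun A q t i = vfun A q t j) : i = j := by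
  simp only [vfun, wfun] at hv; split_ifs at hv <;> omega

lemma wfun_spec (A q s : ℕ) : (s + 2 < A ∧ wfun A q s = s + 2) ∨
    (A ≤ s + 2 ∧ wfun A q s = s + q + 3) := by
  simp only [wfun]; split_ifs <;> omega

lemma vfun_spec (A q t i : ℕ) : (i ≤ q ∧ vfun A q t i = A + i) ∨
    (i = q + 1 ∧ vfun A q t i = 1) ∨ (i = q + 2 + t ∧ vfun A q t i = 0) ∨
    (q + 1 < i ∧ i < q + 2 + t ∧ ((i < q + A ∧ vfun A q t i = i - q) ∨
      (q + A ≤ i ∧ vfun A q t i = i + 1))) ∨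
    (q + 2 + t < i ∧ ((i < q + A + 1 ∧ vfun A q t i = i - q - 1) ∨
      (q + A + 1 ≤ i ∧ vfun A q t i = i))) := by
  simp only [vfun, wfun]; split_ifs <;> omega

section Structure

variable {n : ℕ} {v : ℕ → ℕ}

/-- "every later value is 0 or bigger than `v k`" -/
def Pmin (n : ℕ) (v : ℕ → ℕ) (k : ℕ) : Prop := ∀ j, k < j → j < n → v j = 0 ∨ v k < v j

lemma chain_step (hinj : ∀ i j, i < n → j < n → v i = v j → i = j)
    (Hno : ∀ i j, i < n → j < n → i + 1 < j → ¬(v i < v j ∧ v j < v (i+1)))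
    {k : ℕ} (hk : k + 1 < n) (hP : Pmin n v k) (hnz : v (k+1) ≠ 0) : Pmin n v (k+1) := by
  have hstep : v k < v (k+1) := by
    rcases hP (k+1) (by omega) hk with h | h
    · omega
    · exact h
  intro j hj hjn
  rcases hP j (by omega) hjn with h | h
  · exact Or.inl h
  · right
    have hne : v j ≠ v (k+1) := fun he => by
      have := hinj j (k+1) hjn hk he; omega
    have := Hno k j (by omega) hjn hj
    omega

lemma chain (hinj : ∀ i j, i < n → j < n → v i = v j → i = j)
    (Hno : ∀ i j, i < n → j < n → i + 1 < j → ¬(v i < v j ∧ v j < v (i+1)))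
    (d : ℕ) : ∀ k, k + d < n → Pmin n v k → (∀ l, k < l → l ≤ k + d → v l ≠ 0) →
      Pmin n v (k + d) := by
  induction d with
  | zero => intro k _ hP _; exact hP
  | succ d ih =>
    intro k hkd hP hnz
    have h1 : Pmin n v (k + d) := ih k (by omega) hP (fun l h1 h2 => hnz l h1 (by omega))
    have h2 := chain_step hinj Hno (k := k + d) (by omega) h1 (hnz (k + d + 1) (by omega) (by omega))
    have he : k + (d + 1) = k + d + 1 := by omega
    rw [he]
    exact h2

lemma main_structure (n : ℕ) (v : ℕ → ℕ)
    (hlt : ∀ i, i < n → v i < n)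
    (hinj : ∀ i j, i < n → j < n → v i = v j → i = j)
    (hsurj : ∀ y, y < n → ∃ m, m < n ∧ v m = y)
    (Hno : ∀ i j, i < n → j < n → i + 1 < j → ¬(v i < v j ∧ v j < v (i+1)))
    (i0 j0 : ℕ) (hi0n : i0 < n) (hj0n : j0 < n) (hij : i0 + 1 < j0)
    (hocc1 : v j0 < v (i0+1)) (hocc2 : v (i0+1) < v i0)
    (huniq : ∀ i j, i < n → j < n → i + 1 < j → v j < v (i+1) → v (i+1) < v i →
      i = i0 ∧ j = j0) :
    ∃ A q t, 2 ≤ A ∧ A + q + 1 ≤ n ∧ t + q + 3 ≤ n ∧ ∀ i, i < n → v i = vfun A q t i := by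
  have hn3 : 3 ≤ n := by omega
  have hi1n : i0 + 1 < n := by omega
  -- the value 0 sits at position j0
  have hj0 : v j0 = 0 := by
    by_contra hmj
    obtain ⟨m, hmn, hm0⟩ := hsurj 0 (by omega)
    have hmne : m ≠ j0 := fun h => by subst h; exact hmj hm0
    rcases Nat.lt_trichotomy m (i0+1) with hlt' | heq | hgt
    · -- m ≤ i0 : chain argument gives contradiction
      have hPm : Pmin n v m := by
        intro j hj hjn
        right
        have : v j ≠ 0 := fun h => by have := hinj j m hjn hmn (by omega); omega
        omega
      have hPi0 : Pmin n v i0 := by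
        have hc := chain hinj Hno (i0 - m) m (by omega) hPm (fun l hl1 hl2 h0 => by
          have := hinj l m (by omega) hmn (by omega); omega)
        have he : m + (i0 - m) = i0 := by omega
        rw [he] at hc; exact hc
      rcases hPi0 (i0+1) (by omega) hi1n with h | h
      · have := hinj (i0+1) m hi1n hmn (by omega); omega
      · omega
    · subst heq; omega
    · have := huniq i0 m hi0n hmn hgt (by omega) hocc2
      omega
  have h0pos : ∀ l, l < n → v l = 0 → l = j0 := fun l hl h0 =>
    hinj l j0 hl hj0n (by omega)
  -- the value 1 sits at position i0+1
  have h1pos : v (i0+1) = 1 := by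
    by_contra hne1
    obtain ⟨m, hmn, hm1⟩ := hsurj 1 (by omega)
    have hmne : m ≠ i0 + 1 := fun h => by subst h; exact hne1 hm1
    have hv1 : 2 ≤ v (i0+1) := by
      have : v (i0+1) ≠ 0 := fun h => by have := h0pos (i0+1) hi1n h; omega
      omega
    rcases Nat.lt_trichotomy m (i0+1) with hlt' | heq | hgt
    · -- m ≤ i0
      have hmni0 : m ≠ i0 := fun h => by subst h; omega
      have hPm : Pmin n v m := by
        intro j hj hjn
        rcases Nat.eq_zero_or_pos (v j) with h | h
        · exact Or.inl h
        · right
          have : v j ≠ 1 := fun he => by have := hinj j m hjn hmn (by omega); omega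
          omega
      have hPi0 : Pmin n v i0 := by
        have hc := chain hinj Hno (i0 - m) m (by omega) hPm (fun l hl1 hl2 h0 => by
          have := h0pos l (by omega) h0; omega)
        have he : m + (i0 - m) = i0 := by omega
        rw [he] at hc; exact hc
      rcases hPi0 (i0+1) (by omega) hi1n with h | h
      · have := h0pos (i0+1) hi1n h; omega
      · omega
    · exact hmne heq
    · have hmnej0 : m ≠ j0 := fun h => by subst h; omega
      have := huniq i0 m hi0n hmn hgt (by omega) hocc2
      omega
  set A := v 0 with hAdef
  -- prefix is A, A+1, ..., A+i0
  have hpre : ∀ i, i ≤ i0 → ∀ p, p ≤ i → v p = A + p := by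
    intro i
    induction i with
    | zero => intro _ p hp; interval_cases p; omega
    | succ i ih =>
      intro hii0 p hp
      have ihh := ih (by omega)
      have hpn : i + 1 < n := by omega
      have hstep : v (i+1) = A + (i+1) := by
        have hvi : v i = A + i := ihh i le_rfl
        have hnodesc : v i < v (i+1) := by
          by_contra hd
          have hne : v (i+1) ≠ v i := fun he => by
            have := hinj (i+1) i hpn (by omega) he; omega
          have hpz : v (i+1) ≠ 0 := fun h0 => by
            have := h0pos (i+1) hpn h0; omega
          have := huniq i j0 (by omega) hj0n (by omega) (by omega) (by omega)
          omega
        by_contra hne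
        have hun : A + i + 1 < v (i+1) := by omega
        have hunn : A + i + 1 < n := by have := hlt (i+1) hpn; omega
        obtain ⟨m, hmn, hmu⟩ := hsurj (A + i + 1) (by omega)
        rcases Nat.lt_trichotomy m (i+1) with h1 | h2 | h3
        · have : v m ≤ A + i := by have := ihh m (by omega); omega
          omega
        · subst h2; omega
        · exact Hno i m (by omega) hmn (by omega) (by omega)
      rcases Nat.lt_or_ge p (i+1) with h | h
      · exact ihh p (by omega)
      · have hpe : p = i + 1 := by omega
        rw [hpe]; exact hstep
  have hprei : ∀ p, p ≤ i0 → v p = A + p := hpre i0 (le_refl i0)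
  have hA2 : 2 ≤ A := by
    have h0 : v 0 ≠ 0 := fun h => by have := h0pos 0 (by omega) h; omega
    have h1 : v 0 ≠ 1 := fun h => by
      have := hinj 0 (i0+1) (by omega) hi1n (by omega); omega
    omega
  have hAn : A + i0 + 1 ≤ n := by
    have := hlt i0 hi0n
    have := hprei i0 (le_refl i0)
    omega
  set t := j0 - i0 - 2 with htdef
  have htj0 : j0 = i0 + 2 + t := by omega
  have htn : t + i0 + 3 ≤ n := by omega
  -- Pmin holds at every position ≥ i0+1
  have Pall : ∀ p, i0 + 1 ≤ p → p < n → Pmin n v p := by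
    intro p
    induction p with
    | zero => omega
    | succ p ih =>
      intro hp hpn
      rcases Nat.lt_or_ge p (i0+1) with h | h
      · -- p+1 = i0+1
        have hpe : p + 1 = i0 + 1 := by omega
        rw [hpe]
        intro j hj hjn
        rcases Nat.eq_zero_or_pos (v j) with h0 | h0
        · exact Or.inl h0
        · right
          rw [h1pos]
          have : v j ≠ 1 := fun he => by
            have := hinj j (i0+1) hjn hi1n (by rw [he, h1pos]); omega
          omega
      · have hPp : Pmin n v p := ih h (by omega)
        by_cases he : p + 1 = j0
        · intro j hj hjn
          right
          rw [he, hj0]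
          have : v j ≠ 0 := fun h0 => by have := h0pos j hjn h0; omega
          omega
        · exact chain_step hinj Hno hpn hPp (fun h0 => he (h0pos (p+1) hpn h0))
  refine ⟨A, i0, t, hA2, hAn, htn, ?_⟩
  set k := n - i0 - 3 with hkdef
  set posf : ℕ → ℕ := fun s => if s < t then i0 + 2 + s else i0 + 3 + s with hposf
  have hposf_lt : ∀ s, s < k → posf s < n := by
    intro s hs; simp only [hposf]; split_ifs <;> omega
  have hposf_ge : ∀ s, i0 + 2 ≤ posf s := by
    intro s; simp only [hposf]; split_ifs <;> omega
  have hposf_ne : ∀ s, s < k → posf s ≠ j0 := by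
    intro s hs; simp only [hposf]; split_ifs <;> omega
  set C : Finset ℕ := (Finset.range n).filter (fun x => 2 ≤ x ∧ ¬(A ≤ x ∧ x ≤ A + i0))
    with hCdef
  have hmemC : ∀ x, x ∈ C ↔ x < n ∧ (2 ≤ x ∧ ¬(A ≤ x ∧ x ≤ A + i0)) := by
    intro x; rw [hCdef, Finset.mem_filter, Finset.mem_range]
  have hFC : ∀ s : Fin k, v (posf (s : ℕ)) ∈ C := by
    intro s
    rw [hmemC]
    have h1 := hlt (posf s) (hposf_lt s s.isLt)
    have h2 : v (posf s) ≠ 0 := fun h0 => (hposf_ne s s.isLt) (h0pos _ (hposf_lt s s.isLt) h0)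
    have h3 : v (posf s) ≠ 1 := fun h1' => by
      have := hinj (posf s) (i0+1) (hposf_lt s s.isLt) hi1n (by rw [h1', h1pos])
      have := hposf_ge s; omega
    refine ⟨h1, by omega, ?_⟩
    rintro ⟨ha, hb⟩
    have hup : v (v (posf s) - A) = v (posf s) - A + A := by
      have := hprei (v (posf s) - A) (by omega); omega
    have := hinj (posf s) (v (posf s) - A) (hposf_lt s s.isLt) (by omega) (by omega)
    have := hposf_ge s; omega
  have hFmono : StrictMono (fun s : Fin k => v (posf (s : ℕ))) := by
    intro s1 s2 hs
    have hs' : (s1 : ℕ) < (s2 : ℕ) := hs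
    have hp1 : posf s1 < posf s2 := by
      simp only [hposf]; split_ifs <;> omega
    have hP := Pall (posf s1) (by have := hposf_ge s1; omega) (hposf_lt s1 s1.isLt)
    rcases hP (posf s2) hp1 (hposf_lt s2 s2.isLt) with h0 | h
    · exact absurd (h0pos _ (hposf_lt s2 s2.isLt) h0) (hposf_ne s2 s2.isLt)
    · exact h
  have hGC : ∀ s : Fin k, wfun A i0 (s : ℕ) ∈ C := by
    intro s
    rw [hmemC]
    have hs := s.isLt
    rcases wfun_spec A i0 (s : ℕ) with ⟨h1, h2⟩ | ⟨h1, h2⟩ <;> omega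
  have hGmono : StrictMono (fun s : Fin k => wfun A i0 (s : ℕ)) := by
    intro s1 s2 hs
    have hs' : (s1 : ℕ) < (s2 : ℕ) := hs
    simp only [wfun]; split_ifs <;> omega
  have hcard : C.card = k := by
    have himg : C = (Finset.range k).image (fun s => wfun A i0 s) := by
      ext x
      rw [hmemC]
      simp only [Finset.mem_image, Finset.mem_range]
      constructor
      · rintro ⟨hx, h2x, hnx⟩
        refine ⟨if x < A then x - 2 else x - i0 - 3, by split_ifs <;> omega, ?_⟩
        simp only [wfun]; split_ifs <;> omega
      · rintro ⟨s, hs, rfl⟩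
        rcases wfun_spec A i0 s with ⟨h1, h2⟩ | ⟨h1, h2⟩ <;> omega
    rw [himg, Finset.card_image_of_injOn, Finset.card_range]
    intro a ha b hb hab
    simp only [Finset.coe_range, Set.mem_Iio] at ha hb
    simp only [wfun] at hab; split_ifs at hab <;> omega
  have hFeq := Finset.orderEmbOfFin_unique hcard hFC hFmono
  have hGeq := Finset.orderEmbOfFin_unique hcard hGC hGmono
  have hVW : ∀ s, (hs : s < k) → v (posf s) = wfun A i0 s := by
    intro s hs
    have h1 := congrFun hFeq ⟨s, hs⟩
    have h2 := congrFun hGeq ⟨s, hs⟩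
    simp only at h1 h2
    rw [h1, h2]
  intro i hin
  have hvs := vfun_spec A i0 t i
  rcases Nat.lt_or_ge i (i0+1) with hc | hc
  · have := hprei i (by omega); omega
  rcases Nat.eq_or_lt_of_le hc with hc1 | hc2
  · have hv1 : v i = 1 := by rw [← hc1]; exact h1pos
    omega
  rcases Nat.lt_trichotomy i j0 with hd | hd | hd
  · have hs : i - i0 - 2 < k := by omega
    have hvw : v (posf (i - i0 - 2)) = wfun A i0 (i - i0 - 2) := hVW _ hs
    have hpeq : posf (i - i0 - 2) = i := by
      simp only [hposf]; rw [if_pos (by omega)]; omega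
    rw [hpeq] at hvw
    rcases wfun_spec A i0 (i - i0 - 2) with ⟨h1, h2⟩ | ⟨h1, h2⟩ <;> omega
  · have hv0 : v i = 0 := by rw [hd]; exact hj0
    omega
  · have hs : i - i0 - 3 < k := by omega
    have hvw : v (posf (i - i0 - 3)) = wfun A i0 (i - i0 - 3) := hVW _ hs
    have hpeq : posf (i - i0 - 3) = i := by
      simp only [hposf]; rw [if_neg (by omega)]; omega
    rw [hpeq] at hvw
    rcases wfun_spec A i0 (i - i0 - 3) with ⟨h1, h2⟩ | ⟨h1, h2⟩ <;> omega



end Structure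


lemma occ13_2_eq_zero {n : ℕ} {A q t : ℕ} (hA : 2 ≤ A) (h1 : A + q + 1 ≤ n) (h2 : t + q + 3 ≤ n)
    (π : Equiv.Perm (Fin n)) (hpv : ∀ i, permVal π i = if i < n then vfun A q t i else 0) :
    occ13_2 π = 0 := by
  unfold occ13_2
  rw [Finset.card_eq_zero, Finset.filter_eq_empty_iff]
  rintro ⟨i, j⟩ hp
  simp only [Finset.mem_product, Finset.mem_range] at hp
  obtain ⟨hi, hj⟩ := hp
  rintro ⟨hij, hlt⟩
  rw [hpv i, hpv j, hpv (i+1), if_pos hi, if_pos hj, if_pos (by omega : i + 1 < n)] at hlt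
  have r1 := vfun_spec A q t i
  have r2 := vfun_spec A q t (i+1)
  have r3 := vfun_spec A q t j
  omega

lemma occ32_1_eq_one {n : ℕ} {A q t : ℕ} (hA : 2 ≤ A) (h1 : A + q + 1 ≤ n) (h2 : t + q + 3 ≤ n)
    (π : Equiv.Perm (Fin n)) (hpv : ∀ i, permVal π i = if i < n then vfun A q t i else 0) :
    occ32_1 π = 1 := by
  unfold occ32_1
  have he : ((Finset.range n ×ˢ Finset.range n).filter (fun p =>
      p.1 + 1 < p.2 ∧ permVal π p.2 < permVal π (p.1 + 1) ∧
        permVal π (p.1 + 1) < permVal π p.1)) = {(q, q + 2 + t)} := by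
    ext ⟨i, j⟩
    simp only [Finset.mem_filter, Finset.mem_product, Finset.mem_range, Finset.mem_singleton,
      Prod.mk.injEq]
    constructor
    · rintro ⟨⟨hi, hj⟩, hij, hlt⟩
      rw [hpv i, hpv j, hpv (i+1), if_pos hi, if_pos hj, if_pos (by omega : i + 1 < n)] at hlt
      have r1 := vfun_spec A q t i
      have r2 := vfun_spec A q t (i+1)
      have r3 := vfun_spec A q t j
      omega
    · rintro ⟨hiq, hjq⟩
      have hi : i < n := by omega
      have hj : j < n := by omega
      refine ⟨⟨hi, hj⟩, by omega, ?_⟩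
      rw [hpv i, hpv j, hpv (i+1), if_pos hi, if_pos hj, if_pos (by omega : i + 1 < n)]
      have r1 := vfun_spec A q t i
      have r2 := vfun_spec A q t (i+1)
      have r3 := vfun_spec A q t j
      omega
  rw [he, Finset.card_singleton]

noncomputable def Phi' {n : ℕ} (q A t : ℕ) : Equiv.Perm (Fin n) :=
  if h : 2 ≤ A ∧ A + q + 1 ≤ n ∧ t + q + 3 ≤ n then
    Equiv.ofBijective (fun i => ⟨vfun A q t i, vfun_lt h.1 h.2.1 h.2.2 i.isLt⟩)
      (Finite.injective_iff_bijective.mp fun i j hij =>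
        Fin.ext (vfun_inj h.1 h.2.1 h.2.2 i.isLt j.isLt (congrArg Fin.val hij)))
  else 1

lemma permVal_Phi' {n q A t : ℕ} (h : 2 ≤ A ∧ A + q + 1 ≤ n ∧ t + q + 3 ≤ n) (i : ℕ) :
    permVal (Phi' (n := n) q A t) i = if i < n then vfun A q t i else 0 := by
  unfold permVal
  split_ifs with hin
  · rw [Phi', dif_pos h]; rfl
  · rfl

lemma permVal_coe {n : ℕ} (π : Equiv.Perm (Fin n)) (x : Fin n) :
    permVal π (x : ℕ) = (π x : ℕ) := by
  simp [permVal, x.isLt]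

lemma exists_params {n : ℕ} (π : Equiv.Perm (Fin n)) (h0 : occ13_2 π = 0)
    (h1 : occ32_1 π = 1) :
    ∃ A q t, 2 ≤ A ∧ A + q + 1 ≤ n ∧ t + q + 3 ≤ n ∧
      ∀ i, permVal π i = if i < n then vfun A q t i else 0 := by
  have hlt : ∀ i, i < n → permVal π i < n := by
    intro i hi; simp only [permVal, dif_pos hi]; exact (π _).isLt
  have hinj : ∀ i j, i < n → j < n → permVal π i = permVal π j → i = j := by
    intro i j hi hj he
    simp only [permVal, dif_pos hi, dif_pos hj] at he
    have := π.injective (Fin.ext he)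
    exact congrArg Fin.val this
  have hsurj : ∀ y, y < n → ∃ m, m < n ∧ permVal π m = y := by
    intro y hy
    refine ⟨π.symm ⟨y, hy⟩, (π.symm ⟨y, hy⟩).isLt, ?_⟩
    rw [permVal_coe π (π.symm ⟨y, hy⟩)]
    simp
  have Hno : ∀ i j, i < n → j < n → i + 1 < j →
      ¬(permVal π i < permVal π j ∧ permVal π j < permVal π (i+1)) := by
    intro i j hi hj hij hc
    have hE := Finset.card_eq_zero.mp h0
    rw [Finset.filter_eq_empty_iff] at hE
    have hmem' : (i, j) ∈ Finset.range n ×ˢ Finset.range n :=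
      Finset.mem_product.mpr ⟨Finset.mem_range.mpr hi, Finset.mem_range.mpr hj⟩
    have := hE hmem'
    dsimp only at this
    exact this ⟨hij, hc.1, hc.2⟩
  obtain ⟨⟨i0, j0⟩, hp⟩ := Finset.card_eq_one.mp h1
  have hmem : (i0, j0) ∈ ((Finset.range n ×ˢ Finset.range n).filter (fun p =>
      p.1 + 1 < p.2 ∧ permVal π p.2 < permVal π (p.1 + 1) ∧
        permVal π (p.1 + 1) < permVal π p.1)) := by
    rw [hp]; exact Finset.mem_singleton_self _
  rw [Finset.mem_filter, Finset.mem_product, Finset.mem_range, Finset.mem_range] at hmem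
  obtain ⟨⟨hi0n, hj0n⟩, hij, hocc1, hocc2⟩ := hmem
  have huniq : ∀ i j, i < n → j < n → i + 1 < j → permVal π j < permVal π (i+1) →
      permVal π (i+1) < permVal π i → i = i0 ∧ j = j0 := by
    intro i j hi hj hij' ha hb
    have : (i, j) ∈ ({(i0, j0)} : Finset (ℕ × ℕ)) := by
      rw [← hp, Finset.mem_filter, Finset.mem_product]
      exact ⟨⟨Finset.mem_range.mpr hi, Finset.mem_range.mpr hj⟩, hij', ha, hb⟩
    rw [Finset.mem_singleton, Prod.mk.injEq] at this
    exact this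
  obtain ⟨A, q, t, hA, h1', h2', hv⟩ := main_structure n (permVal π) hlt hinj hsurj Hno
    i0 j0 hi0n hj0n hij hocc1 hocc2 huniq
  refine ⟨A, q, t, hA, h1', h2', fun i => ?_⟩
  by_cases hin : i < n
  · rw [if_pos hin]; exact hv i hin
  · rw [if_neg hin]; simp [permVal, hin]

def Tset (n : ℕ) : Finset (ℕ × ℕ × ℕ) :=
  (Finset.range n ×ˢ Finset.range n ×ˢ Finset.range n).filter
    (fun x => 2 ≤ x.2.1 ∧ x.2.1 + x.1 + 1 ≤ n ∧ x.2.2 + x.1 + 3 ≤ n)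

lemma mem_Tset {n q A t : ℕ} : (q, A, t) ∈ Tset n ↔
    (q < n ∧ A < n ∧ t < n) ∧ (2 ≤ A ∧ A + q + 1 ≤ n ∧ t + q + 3 ≤ n) := by
  simp [Tset, Finset.mem_filter, Finset.mem_product, and_assoc]

lemma card_S_eq (n : ℕ) :
    (Finset.univ.filter (fun π : Equiv.Perm (Fin n) =>
      occ13_2 π = 0 ∧ occ32_1 π = 1)).card = (Tset n).card := by
  refine (Finset.card_bij (fun a _ => Phi' (n := n) a.1 a.2.1 a.2.2) ?_ ?_ ?_).symm
  · rintro ⟨q, A, t⟩ ha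
    rw [mem_Tset] at ha
    obtain ⟨_, hc⟩ := ha
    rw [Finset.mem_filter]
    exact ⟨Finset.mem_univ _,
      occ13_2_eq_zero hc.1 hc.2.1 hc.2.2 _ (permVal_Phi' hc),
      occ32_1_eq_one hc.1 hc.2.1 hc.2.2 _ (permVal_Phi' hc)⟩
  · rintro ⟨q1, A1, t1⟩ ha1 ⟨q2, A2, t2⟩ ha2 he
    rw [mem_Tset] at ha1 ha2
    obtain ⟨-, hc1⟩ := ha1
    obtain ⟨-, hc2⟩ := ha2
    dsimp only at he
    have hv : ∀ i, (if i < n then vfun A1 q1 t1 i else 0) =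
        (if i < n then vfun A2 q2 t2 i else 0) := by
      intro i
      rw [← permVal_Phi' hc1 i, ← permVal_Phi' hc2 i, he]
    have hq : q1 = q2 := by
      rcases Nat.lt_trichotomy q1 q2 with h | h | h
      · have e := hv (q1 + 1)
        rw [if_pos (by omega), if_pos (by omega)] at e
        have s1 := vfun_spec A1 q1 t1 (q1 + 1)
        have s2 := vfun_spec A2 q2 t2 (q1 + 1)
        omega
      · exact h
      · have e := hv (q2 + 1)
        rw [if_pos (by omega), if_pos (by omega)] at e
        have s1 := vfun_spec A1 q1 t1 (q2 + 1)
        have s2 := vfun_spec A2 q2 t2 (q2 + 1)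
        omega
    subst hq
    have hA : A1 = A2 := by
      have e := hv 0
      rw [if_pos (by omega), if_pos (by omega)] at e
      have s1 := vfun_spec A1 q1 t1 0
      have s2 := vfun_spec A2 q1 t2 0
      omega
    subst hA
    have ht : t1 = t2 := by
      have e := hv (q1 + 2 + t1)
      rw [if_pos (by omega), if_pos (by omega)] at e
      have s1 := vfun_spec A1 q1 t1 (q1 + 2 + t1)
      have s2 := vfun_spec A1 q1 t2 (q1 + 2 + t1)
      omega
    subst ht
    rfl
  · intro π hπ
    rw [Finset.mem_filter] at hπ
    obtain ⟨-, h0, h1⟩ := hπ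
    obtain ⟨A, q, t, hA, h1', h2', hpv⟩ := exists_params π h0 h1
    refine ⟨(q, A, t), ?_, ?_⟩
    · rw [mem_Tset]
      exact ⟨⟨by omega, by omega, by omega⟩, hA, h1', h2'⟩
    · apply Equiv.ext
      intro x
      apply Fin.ext
      have e1 := permVal_Phi' (n := n) ⟨hA, h1', h2'⟩ (x : ℕ)
      rw [permVal_coe] at e1
      have e2 := hpv (x : ℕ)
      rw [permVal_coe] at e2
      rw [e1, e2]

lemma card_Tset (n : ℕ) :
    (Tset n).card = ∑ q ∈ Finset.range n, (n - 2 - q) * (n - 2 - q) := by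
  unfold Tset
  rw [Finset.card_filter, Finset.sum_product]
  refine Finset.sum_congr rfl (fun q hq => ?_)
  rw [← Finset.card_filter]
  have hsplit : ((Finset.range n ×ˢ Finset.range n).filter
      (fun y : ℕ × ℕ => 2 ≤ y.1 ∧ y.1 + q + 1 ≤ n ∧ y.2 + q + 3 ≤ n)) =
      ((Finset.range n).filter (fun A => 2 ≤ A ∧ A + q + 1 ≤ n)) ×ˢ
        ((Finset.range n).filter (fun t => t + q + 3 ≤ n)) := by
    rw [← Finset.filter_product]
    exact Finset.filter_congr (fun x _ => by tauto)
  rw [hsplit, Finset.card_product]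
  have c1 : ((Finset.range n).filter (fun A => 2 ≤ A ∧ A + q + 1 ≤ n)) =
      Finset.Ico 2 (n - q) := by
    ext x
    simp only [Finset.mem_filter, Finset.mem_range, Finset.mem_Ico]
    omega
  have c2 : ((Finset.range n).filter (fun t => t + q + 3 ≤ n)) =
      Finset.range (n - q - 2) := by
    ext x
    simp only [Finset.mem_filter, Finset.mem_range]
    omega
  have d1 : (Finset.Ico 2 (n - q)).card = n - 2 - q := by rw [Nat.card_Ico]; omega
  rw [c1, c2, d1, Finset.card_range]
  have d2 : n - q - 2 = n - 2 - q := by omega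
  rw [d2]

lemma helper_id (m : ℕ) :
    (m - 1) * (m - 2) * (2 * m - 3) + 6 * ((m - 1) * (m - 1)) = m * (m - 1) * (2 * m - 1) := by
  rcases m with _ | _ | m
  · rfl
  · rfl
  · have e1 : m + 2 - 1 = m + 1 := by omega
    have e2 : m + 2 - 2 = m := by omega
    have e3 : 2 * (m + 2) - 3 = 2 * m + 1 := by omega
    have e4 : 2 * (m + 2) - 1 = 2 * m + 3 := by omega
    rw [e1, e2, e3, e4]
    ring

lemma sum_sq (n : ℕ) :
    6 * ∑ q ∈ Finset.range n, (n - 2 - q) * (n - 2 - q) =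
      (n - 1) * (n - 2) * (2 * n - 3) := by
  induction n with
  | zero => rfl
  | succ m ih =>
    rw [Finset.sum_range_succ']
    have he : ∀ q, m + 1 - 2 - (q + 1) = m - 2 - q := by intro q; omega
    simp only [he]
    rw [Nat.mul_add, ih]
    have e0 : m + 1 - 2 - 0 = m - 1 := by omega
    rw [e0]
    have e1 : m + 1 - 1 = m := by omega
    have e2 : m + 1 - 2 = m - 1 := by omega
    have e3 : 2 * (m + 1) - 3 = 2 * m - 1 := by omega
    rw [e1, e2, e3]
    exact helper_id m

theorem stmt15 (n : ℕ) (hn : 1 ≤ n) :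
    ((Finset.univ.filter (fun π : Equiv.Perm (Fin n) =>
      occ13_2 π = 0 ∧ occ32_1 π = 1)).card : ℚ) =
      ((n : ℚ) - 1) * ((n : ℚ) - 2) * (2 * (n : ℚ) - 3) / 6 := by
  have h6 : 6 * (Tset n).card = (n - 1) * (n - 2) * (2 * n - 3) := by
    rw [card_Tset]; exact sum_sq n
  rw [card_S_eq n, eq_div_iff (by norm_num : (6 : ℚ) ≠ 0)]
  rcases Nat.lt_or_ge n 2 with h2 | h2
  · have hn1 : n = 1 := by omega
    subst hn1
    have : (Tset 1).card = 0 := by omega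
    rw [this]
    norm_num
  · have hcast : ((6 * (Tset n).card : ℕ) : ℚ) =
        (((n - 1) * (n - 2) * (2 * n - 3) : ℕ) : ℚ) := by rw [h6]
    push_cast [Nat.cast_sub (by omega : 1 ≤ n), Nat.cast_sub (by omega : 2 ≤ n),
      Nat.cast_sub (by omega : 3 ≤ 2 * n)] at hcast
    linarith
end

section
/- The map Φ defined recursively on 12-3-avoiding permutations by Φ(π', n, π'') = (reverse(π'), n, Φ(π'')), where n is the maximal entry of the permutation and π', π'' are the segments before and after it, is a bijection from the set of 12-3-avoiding permutations of {1,...,n} onto the set of 21-3-avoiding permutations of {1,...,n}, and satisfies Φ∘Φ = identity. -/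
/-- Number of occurrences of the generalized pattern 12-3 in a word (list). -/
def listOcc12_3 (l : List ℕ) : ℕ :=
  ((Finset.range l.length ×ˢ Finset.range l.length).filter (fun p =>
    p.1 + 1 < p.2 ∧ l.getD p.1 0 < l.getD (p.1 + 1) 0 ∧
      l.getD (p.1 + 1) 0 < l.getD p.2 0)).card

/-- Number of occurrences of the generalized pattern 21-3 in a word (list). -/
def listOcc21_3 (l : List ℕ) : ℕ :=
  ((Finset.range l.length ×ˢ Finset.range l.length).filter (fun p =>
    p.1 + 1 < p.2 ∧ l.getD (p.1 + 1) 0 < l.getD p.1 0 ∧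
      l.getD p.1 0 < l.getD p.2 0)).card

/-!
Both patterns have the shape "an adjacent pair `a, b` with `r a b`, later followed by an entry
above `max a b`", with `r = (<)` for 12-3 and `r = (>)` for 21-3. Splitting a permutation at its
maximum `m` as `l₁ ++ m :: l₂`, no occurrence can use `m`, and every occurrence inside `l₁` can be
completed by `m`; so `l₁ ++ m :: l₂` avoids the `r`-pattern iff `l₁` has no adjacent `r`-pair and
`l₂` avoids the `r`-pattern. Reversing `l₁` turns "no adjacent `r`-pair" into "no adjacent
`flip r`-pair", and by induction on the length `Φ` maps `r`-avoiders to `flip r`-avoiders and is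
an involution on them.
-/

namespace List

variable {α : Type*} [LinearOrder α] {r : α → α → Prop}

def AvoidsPairThenAbove (r : α → α → Prop) (l : List α) : Prop :=
  ∀ i j (hij : i + 1 < j) (hj : j < l.length), r l[i] l[i + 1] → l[j] ≤ max l[i] l[i + 1]

namespace AvoidsPairThenAbove

theorem of_length_le_two {l : List α} (hl : l.length ≤ 2) : l.AvoidsPairThenAbove r :=
  fun _ _ _ _ => by omega

theorem cons_cons_iff {a b : α} {t : List α} :
    (a :: b :: t).AvoidsPairThenAbove r ↔
      (r a b → ∀ c ∈ t, c ≤ max a b) ∧ (b :: t).AvoidsPairThenAbove r := by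
  constructor
  · intro h
    refine ⟨fun hab c hc => ?_, fun i j hij hj => h (i + 1) (j + 1) (by omega) (by simpa using hj)⟩
    obtain ⟨k, hk, rfl⟩ := mem_iff_getElem.mp hc
    exact h 0 (k + 2) (by omega) (by simpa using hk) hab
  · rintro ⟨hab, h⟩ (_ | i) j hij hj
    · obtain ⟨k, rfl⟩ : ∃ k, j = k + 2 := ⟨j - 2, by omega⟩
      exact fun hr => hab hr _ (getElem_mem _)
    · obtain ⟨k, rfl⟩ : ∃ k, j = k + 1 := ⟨j - 1, by omega⟩
      exact h i k (by omega) (by simpa using hj)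

theorem cons_iff_of_forall_lt {a : α} {l : List α} (h : ∀ x ∈ l, x < a) :
    (a :: l).AvoidsPairThenAbove r ↔ l.AvoidsPairThenAbove r := by
  match l with
  | [] => exact iff_of_true (of_length_le_two (by simp)) (of_length_le_two (by simp))
  | b :: t =>
    rw [cons_cons_iff, and_iff_right_iff_imp]
    exact fun _ _ c hc => (h c (mem_cons_of_mem b hc)).le.trans (le_max_left a b)

theorem append_cons_iff {l₁ l₂ : List α} {m : α} (h₁ : ∀ x ∈ l₁, x < m)
    (h₂ : ∀ x ∈ l₂, x < m) :
    (l₁ ++ m :: l₂).AvoidsPairThenAbove r ↔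
      l₁.IsChain (fun a b => ¬ r a b) ∧ l₂.AvoidsPairThenAbove r := by
  induction l₁ with
  | nil => simpa using cons_iff_of_forall_lt h₂
  | cons a l₁ ih =>
    have ih := ih fun x hx => h₁ x (mem_cons_of_mem a hx)
    match l₁ with
    | [] =>
      rw [singleton_append, cons_cons_iff, cons_iff_of_forall_lt h₂]
      simp only [isChain_singleton, true_and, and_iff_right_iff_imp]
      exact fun _ _ c hc => (h₂ c hc).le.trans (le_max_right a m)
    | b :: s =>
      have hab : max a b < m := max_lt (h₁ a (by simp)) (h₁ b (by simp))
      have no_pair_iff : (r a b → ∀ c ∈ s ++ m :: l₂, c ≤ max a b) ↔ ¬ r a b :=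
        ⟨fun h hr => (h hr m (by simp)).not_gt hab, fun h hr => absurd hr h⟩
      rw [cons_append, cons_append, cons_cons_iff, no_pair_iff, isChain_cons_cons, and_assoc,
        ← ih, cons_append]

end AvoidsPairThenAbove

theorem avoidsPairThenAbove_iff_getD {r : ℕ → ℕ → Prop} {l : List ℕ} :
    l.AvoidsPairThenAbove r ↔ ∀ i j, i + 1 < j → j < l.length →
      r (l.getD i 0) (l.getD (i + 1) 0) → l.getD j 0 ≤ max (l.getD i 0) (l.getD (i + 1) 0) := by
  refine forall₂_congr fun i j => forall_congr' fun hij => forall_congr' fun hj => ?_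
  rw [getD_eq_getElem _ _ (by omega : i < l.length),
    getD_eq_getElem _ _ (by omega : i + 1 < l.length), getD_eq_getElem _ _ hj]

theorem Nodup.exists_eq_append_cons_of_forall_lt {l : List α} (hl : l.Nodup) (hne : l ≠ []) :
    ∃ l₁ m l₂, l = l₁ ++ m :: l₂ ∧ (∀ x ∈ l₁, x < m) ∧ (∀ x ∈ l₂, x < m) := by
  obtain ⟨m, hm, hmax⟩ := l.toFinset.exists_max_image id ((toFinset_nonempty_iff l).mpr hne)
  obtain ⟨l₁, l₂, rfl⟩ := append_of_mem (mem_toFinset.mp hm)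
  have hm' : m ∉ l₁ ++ l₂ := (nodup_cons.mp (nodup_middle.mp hl)).1
  refine ⟨l₁, m, l₂, rfl, fun x hx => ?_, fun x hx => ?_⟩ <;>
    exact lt_of_le_of_ne (hmax x (by simp [hx])) fun h => hm' (h ▸ by simp [hx])

end List

open List

theorem listOcc12_3_eq_zero_iff (l : List ℕ) :
    listOcc12_3 l = 0 ↔ l.AvoidsPairThenAbove (· < ·) := by
  simp only [listOcc12_3, avoidsPairThenAbove_iff_getD, Finset.card_eq_zero,
    Finset.filter_eq_empty_iff, Finset.mem_product, Finset.mem_range, Prod.forall, not_and]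
  refine ⟨fun h i j hij hj hr => ?_, fun h i j hj hij hr => ?_⟩
  · have := h i j ⟨by omega, hj⟩ hij hr
    omega
  · have := h i j hij hj.2 hr
    omega

theorem listOcc21_3_eq_zero_iff (l : List ℕ) :
    listOcc21_3 l = 0 ↔ l.AvoidsPairThenAbove (· > ·) := by
  simp only [listOcc21_3, avoidsPairThenAbove_iff_getD, Finset.card_eq_zero,
    Finset.filter_eq_empty_iff, Finset.mem_product, Finset.mem_range, Prod.forall, not_and]
  refine ⟨fun h i j hij hj hr => ?_, fun h i j hj hij hr => ?_⟩
  · have := h i j ⟨by omega, hj⟩ hij hr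
    omega
  · have := h i j hij hj.2 hr
    omega

theorem perm_avoidsPairThenAbove_flip_and_involutive {α : Type*} [LinearOrder α]
    {Φ : List α → List α} (h0 : Φ [] = [])
    (hrec : ∀ (l₁ l₂ : List α) (m : α),
      (∀ x ∈ l₁, x < m) → (∀ x ∈ l₂, x < m) → Φ (l₁ ++ m :: l₂) = l₁.reverse ++ m :: Φ l₂)
    {r : α → α → Prop} (l : List α) (hl : l.Nodup) (h : l.AvoidsPairThenAbove r) :
    (Φ l).Perm l ∧ (Φ l).AvoidsPairThenAbove (flip r) ∧ Φ (Φ l) = l := by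
  obtain rfl | hne := eq_or_ne l []
  · rw [h0, h0]
    exact ⟨.rfl, .of_length_le_two (by simp), rfl⟩
  obtain ⟨l₁, m, l₂, rfl, h₁, h₂⟩ := hl.exists_eq_append_cons_of_forall_lt hne
  obtain ⟨hchain, h⟩ := (AvoidsPairThenAbove.append_cons_iff h₁ h₂).mp h
  obtain ⟨hperm, havoid, hinv⟩ := perm_avoidsPairThenAbove_flip_and_involutive h0 hrec l₂
    (hl.sublist ((sublist_cons_self m l₂).trans (sublist_append_right l₁ _))) h
  have h₁' : ∀ x ∈ l₁.reverse, x < m := by simpa using h₁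
  have h₂' : ∀ x ∈ Φ l₂, x < m := fun x hx => h₂ x (hperm.subset hx)
  rw [hrec l₁ l₂ m h₁ h₂, hrec _ _ _ h₁' h₂', reverse_reverse, hinv,
    AvoidsPairThenAbove.append_cons_iff h₁' h₂', isChain_reverse]
  exact ⟨(reverse_perm l₁).append (hperm.cons m), ⟨hchain, havoid⟩, rfl⟩
termination_by l.length
decreasing_by grind

theorem stmt16 (Φ : List ℕ → List ℕ)
    (h0 : Φ [] = [])
    (hrec : ∀ (l₁ l₂ : List ℕ) (m : ℕ),
      (∀ x ∈ l₁, x < m) → (∀ x ∈ l₂, x < m) →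
      Φ (l₁ ++ m :: l₂) = l₁.reverse ++ m :: Φ l₂) :
    ∀ n : ℕ,
      Set.BijOn Φ
        {l : List ℕ | l.Perm (List.range' 1 n) ∧ listOcc12_3 l = 0}
        {l : List ℕ | l.Perm (List.range' 1 n) ∧ listOcc21_3 l = 0} ∧
      ∀ l : List ℕ, l.Perm (List.range' 1 n) → listOcc12_3 l = 0 →
        Φ (Φ l) = l := by
  intro n
  simp only [listOcc12_3_eq_zero_iff, listOcc21_3_eq_zero_iff]
  have key r : Set.MapsTo Φ {l | l.Perm (range' 1 n) ∧ l.AvoidsPairThenAbove r}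
      {l | l.Perm (range' 1 n) ∧ l.AvoidsPairThenAbove (flip r)} ∧
      Set.LeftInvOn Φ Φ {l | l.Perm (range' 1 n) ∧ l.AvoidsPairThenAbove r} := by
    refine ⟨fun l ⟨hl, ha⟩ => ?_, fun l ⟨hl, ha⟩ => ?_⟩ <;>
      obtain ⟨hperm, havoid, hinv⟩ :=
        perm_avoidsPairThenAbove_flip_and_involutive h0 hrec l (hl.nodup_iff.mpr nodup_range') ha
    exacts [⟨hperm.trans hl, havoid⟩, hinv]
  obtain ⟨maps, inv⟩ := key (· < ·)
  obtain ⟨maps', inv'⟩ := key (· > ·)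
  exact ⟨Set.InvOn.bijOn ⟨inv, inv'⟩ maps maps', fun l hl ha => inv ⟨hl, ha⟩⟩
end
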